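/- arXiv:2106.09792 — 10 statements merged into one kernel-verified Lean document; each statement's English description precedes it below -/
import Mathlib

section
/- Let 0 < κ < 1 and λ = √(1 − κ²). Let φ, δ : ℝ → ℝ be differentiable functions with deriv φ = δ, and suppose that for every real u, δ(u)³ + 3 δ(u)² = 4(1 − κ² sin²(φ(u))). Then at every point u with δ(u) ≠ 0 and δ(u) ≠ −2, one has 9 (deriv δ (u))² = 4 (1 − δ(u)) (δ(u)³ + 3 δ(u)² − 4λ²). -/
open Real

/-- Let `0 < κ < 1`, `λ = √(1 − κ²)`, and let `φ, δ : ℝ → ℝ` be differentiable with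
`deriv φ = δ` and `δ³ + 3δ² = 4(1 − κ² sin² φ)` everywhere. Then at every point `u`
with `δ u ≠ 0` and `δ u ≠ −2`,
`9 (δ′ u)² = 4 (1 − δ u)(δ u³ + 3 δ u² − 4λ²)`. -/
theorem stmt_5 (κ : ℝ) (hκ0 : 0 < κ) (hκ1 : κ < 1) (l : ℝ) (hl : l = Real.sqrt (1 - κ ^ 2))
    (φ δ : ℝ → ℝ) (hφ : Differentiable ℝ φ) (hδ : Differentiable ℝ δ)
    (hφ' : deriv φ = δ)
    (hcubic : ∀ u : ℝ, δ u ^ 3 + 3 * δ u ^ 2 = 4 * (1 - κ ^ 2 * Real.sin (φ u) ^ 2)) :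
    ∀ u : ℝ, δ u ≠ 0 → δ u ≠ -2 →
      9 * (deriv δ u) ^ 2 = 4 * (1 - δ u) * (δ u ^ 3 + 3 * δ u ^ 2 - 4 * l ^ 2) := by
  intro u h0 h2
  have hl2 : l ^ 2 = 1 - κ ^ 2 := by
    rw [hl, sq_sqrt]; nlinarith
  set a := δ u with ha
  set d := deriv δ u with hd
  set s := Real.sin (φ u) with hs
  set c := Real.cos (φ u) with hc
  have hδu : HasDerivAt δ d u := (hδ u).hasDerivAt
  have hφu : HasDerivAt φ a u := by
    have := (hφ u).hasDerivAt
    rwa [hφ', ← ha] at this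
  have hg : HasDerivAt (fun u => δ u ^ 3 + 3 * δ u ^ 2)
      (3 * a ^ 2 * d + 3 * (2 * a ^ 1 * d)) u := by
    exact (hδu.pow 3).add ((hδu.pow 2).const_mul 3)
  have hsin : HasDerivAt (fun u => Real.sin (φ u)) (c * a) u :=
    (Real.hasDerivAt_sin (φ u)).comp u hφu
  have hh : HasDerivAt (fun u => 4 * (1 - κ ^ 2 * Real.sin (φ u) ^ 2))
      (4 * (-(κ ^ 2 * (2 * s ^ 1 * (c * a))))) u := by
    exact (((hsin.pow 2).const_mul (κ ^ 2)).const_sub 1).const_mul 4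
  have hfun : (fun u => δ u ^ 3 + 3 * δ u ^ 2)
      = (fun u => 4 * (1 - κ ^ 2 * Real.sin (φ u) ^ 2)) := funext hcubic
  have heq : 3 * a ^ 2 * d + 3 * (2 * a ^ 1 * d)
      = 4 * (-(κ ^ 2 * (2 * s ^ 1 * (c * a)))) := by
    rw [hfun] at hg
    exact hg.unique hh
  -- cancel a
  have key : 3 * (a + 2) * d = -8 * κ ^ 2 * s * c := by
    have h' : a * (3 * (a + 2) * d) = a * (-8 * κ ^ 2 * s * c) := by
      simp only [pow_one] at heq; ring_nf; ring_nf at heq; linarith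
    exact mul_left_cancel₀ h0 h'
  have hsq : (3 * (a + 2) * d) ^ 2 = (-8 * κ ^ 2 * s * c) ^ 2 := by rw [key]
  have hsc : s ^ 2 + c ^ 2 = 1 := Real.sin_sq_add_cos_sq (φ u)
  have hcu : a ^ 3 + 3 * a ^ 2 = 4 * (1 - κ ^ 2 * s ^ 2) := hcubic u
  have hne : (a + 2) ≠ 0 := fun h => h2 (by linarith)
  have hne2 : (a + 2) ^ 2 ≠ 0 := pow_ne_zero 2 hne
  have h64 : 64 * κ ^ 4 * s ^ 2 * c ^ 2
      = 4 * (4 - (a ^ 3 + 3 * a ^ 2)) * ((a ^ 3 + 3 * a ^ 2) - 4 + 4 * κ ^ 2) := by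
    linear_combination (16 * κ ^ 2 - 16 * κ ^ 2 * s ^ 2 - 16 + 4 * a ^ 3 + 12 * a ^ 2) * hcu
      + 64 * κ ^ 4 * s ^ 2 * hsc
  have goal2 : 9 * d ^ 2 * (a + 2) ^ 2
      = 4 * (1 - a) * (a ^ 3 + 3 * a ^ 2 - 4 * l ^ 2) * (a + 2) ^ 2 := by
    linear_combination hsq + h64 + 16 * (4 - (a ^ 3 + 3 * a ^ 2)) * hl2
  exact mul_right_cancel₀ hne2 goal2
end

section
/- For 0 < α < π/2 and κ = sin α, ∫₀^{π/2} cos((1/3)·arcsin(κ sin t)) / √(1 − κ² sin² t) dt = √2 · ∫₀^{α} cos(ψ/3) / √(cos 2ψ − cos 2α) dψ. -/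
open Real intervalIntegral
open MeasureTheory Set Filter Topology

/-- For `0 < α < π/2` and `κ = sin α`,
`∫₀^{π/2} cos((1/3)·arcsin(κ sin t)) / √(1 − κ² sin² t) dt
  = √2 · ∫₀^α cos(ψ/3) / √(cos 2ψ − cos 2α) dψ`. -/
theorem stmt_6 (α : ℝ) (hα0 : 0 < α) (hα1 : α < Real.pi / 2) (κ : ℝ) (hκ : κ = Real.sin α) :
    (∫ t in (0:ℝ)..(Real.pi / 2),
        Real.cos ((1/3) * Real.arcsin (κ * Real.sin t)) /
          Real.sqrt (1 - κ ^ 2 * Real.sin t ^ 2)) =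
      Real.sqrt 2 * ∫ ψ in (0:ℝ)..α,
        Real.cos (ψ / 3) / Real.sqrt (Real.cos (2 * ψ) - Real.cos (2 * α)) := by
  subst hκ
  have hπ := Real.pi_pos
  set s : ℝ := Real.sin α with hs
  have hs0 : 0 < s := Real.sin_pos_of_pos_of_lt_pi hα0 (by linarith)
  have hcα : 0 < Real.cos α := Real.cos_pos_of_mem_Ioo ⟨by linarith, hα1⟩
  have hs1 : s < 1 := by
    have := Real.sin_lt_sin_of_lt_of_le_pi_div_two (x := α) (y := Real.pi/2)
      (by linarith) le_rfl hα1
    simpa using this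
  set g : ℝ → ℝ := fun ψ => Real.cos (ψ/3) / Real.sqrt (Real.cos (2*ψ) - Real.cos (2*α)) with hgdef
  set F : ℝ → ℝ := fun t => Real.arcsin (s * Real.sin t) with hFdef
  set F' : ℝ → ℝ :=
    fun t => (1 / Real.sqrt (1 - (s * Real.sin t)^2)) * (s * Real.cos t) with hF'def
  set lf : ℝ → ℝ := fun t => Real.cos ((1/3) * Real.arcsin (s * Real.sin t)) /
      Real.sqrt (1 - s ^ 2 * Real.sin t ^ 2) with hlfdef
  have hxb : ∀ t : ℝ, -1 < s * Real.sin t ∧ s * Real.sin t < 1 := by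
    intro t
    constructor <;> nlinarith [Real.neg_one_le_sin t, Real.sin_le_one t]
  have hxpos : ∀ t : ℝ, 0 < 1 - (s * Real.sin t)^2 := by
    intro t; nlinarith [(hxb t).1, (hxb t).2]
  have hder : ∀ t : ℝ, HasDerivAt F (F' t) t := by
    intro t
    have h1 : HasDerivAt (fun u : ℝ => s * Real.sin u) (s * Real.cos t) t :=
      (Real.hasDerivAt_sin t).const_mul s
    have h2 := Real.hasDerivAt_arcsin (hxb t).1.ne' (hxb t).2.ne
    exact h2.comp t h1
  have hF'cont : Continuous F' := by
    apply Continuous.mul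
    · apply Continuous.div continuous_const
      · exact (Real.continuous_sqrt.comp
          (continuous_const.sub ((continuous_const.mul Real.continuous_sin).pow 2)))
      · intro t; exact (Real.sqrt_pos.2 (hxpos t)).ne'
    · exact continuous_const.mul Real.continuous_cos
  have hαs : Real.arcsin s = α := Real.arcsin_sin (by linarith) (by linarith)
  have hgc : ContinuousOn (fun ψ => Real.sqrt 2 * g ψ) (Ico 0 α) := by
    intro ψ hψ
    apply ContinuousAt.continuousWithinAt
    have hd : 0 < Real.cos (2*ψ) - Real.cos (2*α) := by
      have := Real.cos_lt_cos_of_nonneg_of_le_pi (x := 2*ψ) (y := 2*α)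
        (by linarith [hψ.1]) (by linarith) (by linarith [hψ.2])
      linarith
    apply ContinuousAt.mul continuousAt_const
    apply ContinuousAt.div
    · exact (Real.continuous_cos.comp (continuous_id.div_const 3)).continuousAt
    · exact (Real.continuous_sqrt.comp
        ((Real.continuous_cos.comp (continuous_const.mul continuous_id)).sub
          continuous_const)).continuousAt
    · exact (Real.sqrt_pos.2 hd).ne'
  have key : ∀ β ∈ Ioo (0:ℝ) (Real.pi/2),
      (∫ t in (0:ℝ)..β, lf t) = Real.sqrt 2 * ∫ ψ in (0:ℝ)..F β, g ψ := by
    intro β hβ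
    have huIcc : uIcc (0:ℝ) β = Icc 0 β := uIcc_of_le hβ.1.le
    have himg : F '' (uIcc 0 β) ⊆ Ico 0 α := by
      rintro ψ ⟨t, ht, rfl⟩
      rw [huIcc] at ht
      have hsint : 0 ≤ Real.sin t :=
        Real.sin_nonneg_of_nonneg_of_le_pi ht.1 (by linarith [ht.2, hβ.2])
      have hsint1 : Real.sin t < 1 := by
        have := Real.sin_lt_sin_of_lt_of_le_pi_div_two (x := t) (y := Real.pi/2)
          (by linarith [ht.1]) le_rfl (by linarith [ht.2, hβ.2])
        simpa using this
      constructor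
      · exact Real.arcsin_nonneg.2 (mul_nonneg hs0.le hsint)
      · have hlt : s * Real.sin t < s := by nlinarith
        calc F t < Real.arcsin s := by
              exact Real.strictMonoOn_arcsin ⟨(hxb t).1.le, (hxb t).2.le⟩
                ⟨by linarith, hs1.le⟩ hlt
          _ = α := hαs
    have hsub := intervalIntegral.integral_comp_smul_deriv' (f := F) (f' := F')
      (g := fun ψ => Real.sqrt 2 * g ψ) (a := 0) (b := β)
      (fun t _ => hder t) hF'cont.continuousOn (hgc.mono himg)
    have hF0 : F 0 = 0 := by simp [hFdef]
    rw [hF0] at hsub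
    rw [← intervalIntegral.integral_const_mul, ← hsub]
    apply intervalIntegral.integral_congr
    intro t ht
    rw [huIcc] at ht
    have hct : 0 < Real.cos t :=
      Real.cos_pos_of_mem_Ioo ⟨by linarith [ht.1], by linarith [ht.2, hβ.2]⟩
    have hsinF : Real.sin (F t) = s * Real.sin t :=
      Real.sin_arcsin (hxb t).1.le (hxb t).2.le
    have hcos2F : Real.cos (2 * F t) - Real.cos (2*α) = 2 * (s * Real.cos t)^2 := by
      rw [Real.cos_two_mul (F t), Real.cos_two_mul α]
      have h1 := Real.sin_sq_add_cos_sq (F t)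
      rw [hsinF] at h1
      have h2 : s^2 + Real.cos α^2 = 1 := by rw [hs]; exact Real.sin_sq_add_cos_sq α
      have h3 := Real.sin_sq_add_cos_sq t
      linear_combination 2*h1 - 2*h2 - 2*s^2*h3
    have hsqrt : Real.sqrt (Real.cos (2 * F t) - Real.cos (2*α))
        = Real.sqrt 2 * (s * Real.cos t) := by
      rw [hcos2F, Real.sqrt_mul (by norm_num : (0:ℝ) ≤ 2),
        Real.sqrt_sq (mul_nonneg hs0.le hct.le)]
    have hA : (0:ℝ) < s * Real.cos t := mul_pos hs0 hct
    have hdpos : 0 < Real.sqrt (1 - s ^ 2 * Real.sin t ^ 2) := by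
      apply Real.sqrt_pos.2
      have := hxpos t; nlinarith
    have h2pos : (0:ℝ) < Real.sqrt 2 := by positivity
    show lf t = F' t • (Real.sqrt 2 * g (F t))
    rw [smul_eq_mul, hlfdef, hF'def, hgdef]
    simp only []
    rw [hsqrt]
    have hparen : F t / 3 = (1/3) * Real.arcsin (s * Real.sin t) := by
      show Real.arcsin (s * Real.sin t) / 3 = _
      ring
    rw [hparen, mul_pow]
    field_simp
  have hint : IntervalIntegrable g volume 0 α := by
    set c₀ : ℝ := 2 * (s * Real.cos α) * (2/Real.pi) with hc₀def
    have hc₀ : 0 < c₀ := by positivity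
    set C : ℝ := 1 / Real.sqrt c₀ with hCdef
    have hCpos : 0 < C := by positivity
    have hcomp : IntervalIntegrable (fun ψ => C * (α - ψ) ^ (-(1/2) : ℝ)) volume 0 α := by
      have h1 : IntervalIntegrable (fun x : ℝ => x ^ (-(1/2):ℝ)) volume α 0 :=
        intervalIntegral.intervalIntegrable_rpow' (by norm_num)
      have h2 := h1.comp_sub_left α
      simp only [sub_self, sub_zero] at h2
      exact h2.const_mul C
    apply hcomp.mono_fun
    · apply Measurable.aestronglyMeasurable
      apply Measurable.div
      · exact (Real.continuous_cos.comp (continuous_id.div_const 3)).measurable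
      · exact (Real.continuous_sqrt.comp
          ((Real.continuous_cos.comp (continuous_const.mul continuous_id)).sub
            continuous_const)).measurable
    · filter_upwards [MeasureTheory.ae_restrict_mem measurableSet_uIoc] with ψ hψ
      rw [Set.uIoc_of_le hα0.le] at hψ
      rcases eq_or_lt_of_le hψ.2 with heq | hlt
      · subst heq
        simp [hgdef, Real.zero_rpow (by norm_num : (-(1/2):ℝ) ≠ 0)]
      · have hd : c₀ * (α - ψ) ≤ Real.cos (2*ψ) - Real.cos (2*α) := by
          have e := Real.cos_sub_cos (2*ψ) (2*α)
          have e2 : (2*ψ + 2*α)/2 = ψ + α := by ring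
          have e3 : (2*ψ - 2*α)/2 = -(α - ψ) := by ring
          rw [e2, e3, Real.sin_neg] at e
          have h1 : s * Real.cos α ≤ Real.sin (ψ + α) := by
            rw [Real.sin_add]
            have hψ0 : 0 < ψ := hψ.1
            have hsψ : 0 ≤ Real.sin ψ :=
              Real.sin_nonneg_of_nonneg_of_le_pi hψ0.le (by linarith)
            have hcψ : Real.cos α ≤ Real.cos ψ :=
              Real.cos_le_cos_of_nonneg_of_le_pi hψ0.le (by linarith) hlt.le
            have hcψ0 : 0 ≤ Real.cos ψ := by linarith
            nlinarith
          have h2 : 2/Real.pi * (α - ψ) ≤ Real.sin (α - ψ) :=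
            Real.mul_le_sin (by linarith) (by linarith [hψ.1])
          have h4 : 0 < 2/Real.pi * (α - ψ) := by
            have : 0 < α - ψ := by linarith
            positivity
          nlinarith [h1, h2, h4, mul_pos hs0 hcα]
        have hαψ : 0 < α - ψ := by linarith
        have hDpos : 0 < Real.sqrt (Real.cos (2*ψ) - Real.cos (2*α)) :=
          Real.sqrt_pos.2 (lt_of_lt_of_le (by positivity) hd)
        have hrpow : (α - ψ) ^ (-(1/2) : ℝ) = 1 / Real.sqrt (α - ψ) := by
          rw [Real.rpow_neg hαψ.le, Real.sqrt_eq_rpow]; norm_num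
        have hsq : Real.sqrt c₀ * Real.sqrt (α - ψ) ≤
            Real.sqrt (Real.cos (2*ψ) - Real.cos (2*α)) := by
          rw [← Real.sqrt_mul hc₀.le]
          exact Real.sqrt_le_sqrt hd
        have hsqpos : 0 < Real.sqrt c₀ * Real.sqrt (α - ψ) := by positivity
        have hnorm : ‖g ψ‖ ≤ 1 / (Real.sqrt c₀ * Real.sqrt (α - ψ)) := by
          rw [hgdef]
          simp only [Real.norm_eq_abs, abs_div, abs_of_nonneg (Real.sqrt_nonneg _)]
          calc |Real.cos (ψ/3)| / Real.sqrt (Real.cos (2*ψ) - Real.cos (2*α))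
              ≤ 1 / Real.sqrt (Real.cos (2*ψ) - Real.cos (2*α)) :=
                (div_le_div_iff_of_pos_right hDpos).2 (Real.abs_cos_le_one _)
            _ ≤ 1 / (Real.sqrt c₀ * Real.sqrt (α - ψ)) :=
                one_div_le_one_div_of_le hsqpos hsq
        calc ‖g ψ‖ ≤ 1 / (Real.sqrt c₀ * Real.sqrt (α - ψ)) := hnorm
          _ = C * (α - ψ) ^ (-(1/2) : ℝ) := by rw [hrpow, hCdef]; field_simp
          _ ≤ ‖C * (α - ψ) ^ (-(1/2) : ℝ)‖ := by
              rw [Real.norm_eq_abs]; exact le_abs_self _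
  have hgIntOn : IntegrableOn g (Icc 0 α) volume :=
    (intervalIntegrable_iff_integrableOn_Icc_of_le hα0.le).1 hint
  have hH : ContinuousOn (fun x => ∫ ψ in (0:ℝ)..x, g ψ) (Icc 0 α) := by
    have h := intervalIntegral.continuousOn_primitive_interval (a := 0) (b := α)
      (μ := volume) (f := g) (by rwa [uIcc_of_le hα0.le])
    rwa [uIcc_of_le hα0.le] at h
  have hlfc : Continuous lf := by
    apply Continuous.div
    · exact Real.continuous_cos.comp (continuous_const.mul
        (Real.continuous_arcsin.comp (continuous_const.mul Real.continuous_sin)))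
    · exact Real.continuous_sqrt.comp (continuous_const.sub
        (continuous_const.mul (Real.continuous_sin.pow 2)))
    · intro t
      refine (Real.sqrt_pos.2 ?_).ne'
      have h := hxpos t; rw [mul_pow] at h; exact h
  have hPhi : Continuous (fun β => ∫ t in (0:ℝ)..β, lf t) :=
    intervalIntegral.continuous_primitive (fun a b => hlfc.intervalIntegrable a b) 0
  set l : Filter ℝ := nhdsWithin (Real.pi/2) (Ioo 0 (Real.pi/2)) with hldef
  have hlne : l.NeBot := by
    rw [hldef]
    apply mem_closure_iff_nhdsWithin_neBot.1
    rw [closure_Ioo (by linarith : (0:ℝ) ≠ Real.pi/2)]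
    exact ⟨by linarith, le_rfl⟩
  have hT1 : Tendsto (fun β => ∫ t in (0:ℝ)..β, lf t) l
      (𝓝 (∫ t in (0:ℝ)..(Real.pi/2), lf t)) :=
    (hPhi.tendsto _).mono_left nhdsWithin_le_nhds
  have hFc : Continuous F :=
    Real.continuous_arcsin.comp (continuous_const.mul Real.continuous_sin)
  have hFpi : F (Real.pi/2) = α := by
    show Real.arcsin (s * Real.sin (Real.pi/2)) = α
    rw [Real.sin_pi_div_two, mul_one, hαs]
  have hFt : Tendsto F l (𝓝[Icc 0 α] α) := by
    apply tendsto_nhdsWithin_of_tendsto_nhds_of_eventually_within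
    · have h := hFc.tendsto (Real.pi/2)
      rw [hFpi] at h
      exact h.mono_left nhdsWithin_le_nhds
    · refine eventually_mem_nhdsWithin.mono (fun β hβ => ?_)
      have hsb : 0 ≤ Real.sin β :=
        Real.sin_nonneg_of_nonneg_of_le_pi hβ.1.le (by linarith [hβ.2])
      constructor
      · exact Real.arcsin_nonneg.2 (mul_nonneg hs0.le hsb)
      · have hle : s * Real.sin β ≤ s := by nlinarith [Real.sin_le_one β]
        calc F β ≤ Real.arcsin s := Real.monotone_arcsin hle
          _ = α := hαs
  have hT2 : Tendsto (fun β => Real.sqrt 2 * ∫ ψ in (0:ℝ)..F β, g ψ) l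
      (𝓝 (Real.sqrt 2 * ∫ ψ in (0:ℝ)..α, g ψ)) :=
    tendsto_const_nhds.mul
      (((hH α (right_mem_Icc.2 hα0.le)).tendsto).comp hFt)
  have heqv : (fun β => ∫ t in (0:ℝ)..β, lf t) =ᶠ[l]
      (fun β => Real.sqrt 2 * ∫ ψ in (0:ℝ)..F β, g ψ) :=
    eventually_mem_nhdsWithin.mono (fun β hβ => key β hβ)
  exact tendsto_nhds_unique (hT1.congr' heqv) hT2
end

section
/- For 0 < α < π/2, √2 · ∫₀^{α} cos(ψ/3) / √(cos 2ψ − cos 2α) dψ = √(2/3) · ∫_{π−α}^{π+α} sin(θ/3) / √(cos 2θ − cos 2α) dθ. -/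
open Real intervalIntegral MeasureTheory

/-- Key lower bound: on `[0, α]`, `cos 2x - cos 2α ≥ c (α - x)` for a positive constant. -/
lemma key_bound (α : ℝ) (hα0 : 0 < α) (hα1 : α < Real.pi / 2) :
    ∃ c : ℝ, 0 < c ∧ ∀ x ∈ Set.Icc (0:ℝ) α,
      c * (α - x) ≤ Real.cos (2 * x) - Real.cos (2 * α) := by
  have hπ := Real.pi_pos
  set m := min (Real.sin α) (Real.sin (2 * α)) with hm
  have hmpos : 0 < m := by
    apply lt_min
    · exact Real.sin_pos_of_pos_of_lt_pi hα0 (by linarith)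
    · exact Real.sin_pos_of_pos_of_lt_pi (by linarith) (by linarith)
  refine ⟨2 * m * (2 / Real.pi), by positivity, fun x hx => ?_⟩
  obtain ⟨hx0, hxα⟩ := hx
  have hcc : Real.cos (2 * x) - Real.cos (2 * α)
      = 2 * Real.sin (x + α) * Real.sin (α - x) := by
    rw [Real.cos_sub_cos, show (2*x + 2*α)/2 = x + α by ring,
      show (2*x - 2*α)/2 = -(α - x) by ring, Real.sin_neg]; ring
  have h1 : m ≤ Real.sin (x + α) := by
    have hseg : x + α ∈ segment ℝ α (2 * α) := by
      rw [segment_eq_Icc (by linarith)]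
      constructor <;> [linarith; linarith]
    have := strictConcaveOn_sin_Icc.concaveOn.ge_on_segment
      (x := α) (y := 2 * α) (z := x + α)
      ⟨by linarith, by linarith⟩ ⟨by linarith, by linarith⟩ hseg
    simpa [hm] using this
  have h2 : 2 / Real.pi * (α - x) ≤ Real.sin (α - x) :=
    Real.mul_le_sin (by linarith) (by linarith)
  have hs2 : 0 ≤ Real.sin (α - x) :=
    le_trans (mul_nonneg (by positivity) (by linarith)) h2
  rw [hcc]
  calc 2 * m * (2 / Real.pi) * (α - x)
      = 2 * (m * (2 / Real.pi * (α - x))) := by ring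
    _ ≤ 2 * (Real.sin (x + α) * Real.sin (α - x)) := by
        apply mul_le_mul_of_nonneg_left _ (by norm_num)
        exact mul_le_mul h1 h2 (mul_nonneg (by positivity) (by linarith))
          (by linarith [Real.sin_le_one (x + α)])
    _ = 2 * Real.sin (x + α) * Real.sin (α - x) := by ring

/-- Integrability on `[0, α]` of `φ x / √(cos 2x - cos 2α)` for continuous `φ`. -/
lemma integrable_right (α : ℝ) (hα0 : 0 < α) (hα1 : α < Real.pi / 2)
    (φ : ℝ → ℝ) (hφ : Continuous φ) :
    IntervalIntegrable
      (fun x => φ x / Real.sqrt (Real.cos (2 * x) - Real.cos (2 * α))) volume 0 α := by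
  obtain ⟨c, hc, hbd⟩ := key_bound α hα0 hα1
  obtain ⟨C, hC⟩ := (isCompact_Icc (a := (0:ℝ)) (b := α)).exists_bound_of_continuousOn
    hφ.continuousOn
  have hC0 : 0 ≤ C := le_trans (norm_nonneg _) (hC 0 ⟨le_rfl, hα0.le⟩)
  -- dominating function
  have hg : IntervalIntegrable
      (fun x => (C / Real.sqrt c) * (α - x) ^ (-(1/2) : ℝ)) volume 0 α := by
    have h1 : IntervalIntegrable (fun x : ℝ => x ^ (-(1/2) : ℝ)) volume 0 α :=
      intervalIntegrable_rpow' (by norm_num)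
    have h2 := (h1.comp_sub_left α)
    simp only [sub_zero, sub_self] at h2
    exact (h2.symm.const_mul _)
  apply hg.mono_fun
  · exact (by fun_prop :
      Measurable fun x => φ x / Real.sqrt (Real.cos (2 * x) - Real.cos (2 * α))).aestronglyMeasurable
  · rw [Filter.EventuallyLE, ae_restrict_iff' measurableSet_uIoc]
    apply Filter.Eventually.of_forall
    intro x hx
    rw [Set.uIoc_of_le hα0.le] at hx
    obtain ⟨hx0, hxα⟩ := hx
    rcases eq_or_lt_of_le hxα with rfl | hxlt
    · simp only [Real.norm_eq_abs, sub_self, Real.sqrt_zero, div_zero, abs_zero]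
      rw [Real.zero_rpow (by norm_num)]
      positivity
    · have hαx : 0 < α - x := by linarith
      have hDc : c * (α - x) ≤ Real.cos (2 * x) - Real.cos (2 * α) :=
        hbd x ⟨hx0.le, hxα⟩
      have hDpos : 0 < Real.cos (2 * x) - Real.cos (2 * α) :=
        lt_of_lt_of_le (by positivity) hDc
      have hsq : Real.sqrt c * Real.sqrt (α - x)
          ≤ Real.sqrt (Real.cos (2 * x) - Real.cos (2 * α)) := by
        rw [← Real.sqrt_mul hc.le]
        exact Real.sqrt_le_sqrt hDc
      have hsqpos : 0 < Real.sqrt c * Real.sqrt (α - x) := by positivity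
      have hφx : |φ x| ≤ C := by
        simpa [Real.norm_eq_abs] using hC x ⟨hx0.le, hxα⟩
      rw [Real.norm_eq_abs, Real.norm_eq_abs, abs_div,
        abs_of_nonneg (Real.sqrt_nonneg _)]
      have step1 : |φ x| / Real.sqrt (Real.cos (2 * x) - Real.cos (2 * α))
          ≤ C / (Real.sqrt c * Real.sqrt (α - x)) := by
        apply div_le_div₀ hC0 hφx hsqpos hsq
      have heq : (C / Real.sqrt c) * (α - x) ^ (-(1/2) : ℝ)
          = C / (Real.sqrt c * Real.sqrt (α - x)) := by
        rw [Real.rpow_neg hαx.le, ← Real.sqrt_eq_rpow, ← div_div,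
          div_eq_mul_inv (C / Real.sqrt c)]
      rw [heq, abs_of_nonneg
        (show (0:ℝ) ≤ C / (Real.sqrt c * Real.sqrt (α - x)) by positivity)]
      exact step1

/-- Integrability on `[-α, 0]`. -/
lemma integrable_left (α : ℝ) (hα0 : 0 < α) (hα1 : α < Real.pi / 2)
    (φ : ℝ → ℝ) (hφ : Continuous φ) :
    IntervalIntegrable
      (fun x => φ x / Real.sqrt (Real.cos (2 * x) - Real.cos (2 * α))) volume (-α) 0 := by
  have h := integrable_right α hα0 hα1 (fun u => φ (-u)) (hφ.comp continuous_neg)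
  have h2 := ((IntervalIntegrable.iff_comp_neg (f := fun u => φ (-u) / Real.sqrt (Real.cos (2 * u) - Real.cos (2 * α))) (a := 0) (b := α) (by simp)).mp h)
  simp only [neg_neg, neg_zero, mul_neg, Real.cos_neg] at h2
  exact h2.symm

/-- For `0 < α < π/2`,
`√2 · ∫₀^α cos(ψ/3)/√(cos 2ψ − cos 2α) dψ
  = √(2/3) · ∫_{π−α}^{π+α} sin(θ/3)/√(cos 2θ − cos 2α) dθ`. -/
theorem stmt_7 (α : ℝ) (hα0 : 0 < α) (hα1 : α < Real.pi / 2) :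
    Real.sqrt 2 * (∫ ψ in (0:ℝ)..α,
        Real.cos (ψ / 3) / Real.sqrt (Real.cos (2 * ψ) - Real.cos (2 * α))) =
      Real.sqrt (2 / 3) * ∫ θ in (Real.pi - α)..(Real.pi + α),
        Real.sin (θ / 3) / Real.sqrt (Real.cos (2 * θ) - Real.cos (2 * α)) := by
  have hπ := Real.pi_pos
  set D : ℝ → ℝ := fun ψ => Real.sqrt (Real.cos (2 * ψ) - Real.cos (2 * α)) with hD
  -- Step 1: substitution θ = π + ψ
  have step1 : (∫ θ in (Real.pi - α)..(Real.pi + α),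
        Real.sin (θ / 3) / Real.sqrt (Real.cos (2 * θ) - Real.cos (2 * α)))
      = ∫ ψ in (-α)..α, Real.sin (Real.pi / 3 + ψ / 3) / D ψ := by
    rw [show Real.pi - α = Real.pi + (-α) by ring]
    rw [← intervalIntegral.integral_comp_add_left
      (fun θ => Real.sin (θ / 3) / Real.sqrt (Real.cos (2 * θ) - Real.cos (2 * α))) Real.pi]
    apply intervalIntegral.integral_congr
    intro ψ _
    have h1 : (Real.pi + ψ) / 3 = Real.pi / 3 + ψ / 3 := by ring
    have h2 : Real.cos (2 * (Real.pi + ψ)) = Real.cos (2 * ψ) := by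
      rw [show 2 * (Real.pi + ψ) = 2 * ψ + 2 * Real.pi by ring, Real.cos_add_two_pi]
    show Real.sin ((Real.pi + ψ)/3) / Real.sqrt (Real.cos (2*(Real.pi + ψ)) - Real.cos (2*α))
      = _
    rw [h1, h2]
  -- integrability facts
  have int_g_right : IntervalIntegrable
      (fun ψ => Real.sin (Real.pi / 3 + ψ / 3) / D ψ) volume 0 α :=
    integrable_right α hα0 hα1 _ (by fun_prop)
  have int_g_left : IntervalIntegrable
      (fun ψ => Real.sin (Real.pi / 3 + ψ / 3) / D ψ) volume (-α) 0 :=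
    integrable_left α hα0 hα1 _ (by fun_prop)
  have int_gneg : IntervalIntegrable
      (fun ψ => Real.sin (Real.pi / 3 - ψ / 3) / D ψ) volume 0 α :=
    integrable_right α hα0 hα1 _ (by fun_prop)
  -- Step 2: split and fold
  have step2 : (∫ ψ in (-α)..α, Real.sin (Real.pi / 3 + ψ / 3) / D ψ)
      = Real.sqrt 3 * ∫ ψ in (0:ℝ)..α, Real.cos (ψ / 3) / D ψ := by
    rw [← intervalIntegral.integral_add_adjacent_intervals int_g_left int_g_right]
    have fold' := intervalIntegral.integral_comp_neg
      (fun ψ => Real.sin (Real.pi / 3 + ψ / 3) / D ψ) (a := 0) (b := α)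
    rw [neg_zero] at fold'
    have fold : (∫ ψ in (-α)..(0:ℝ), Real.sin (Real.pi / 3 + ψ / 3) / D ψ)
        = ∫ ψ in (0:ℝ)..α, Real.sin (Real.pi / 3 - ψ / 3) / D ψ := by
      rw [← fold']
      apply intervalIntegral.integral_congr
      intro ψ _
      show Real.sin (Real.pi / 3 + (-ψ) / 3) / D (-ψ) = _
      simp only [hD, mul_neg, Real.cos_neg, neg_div, ← sub_eq_add_neg]
    rw [fold, ← intervalIntegral.integral_add int_gneg int_g_right]
    rw [← intervalIntegral.integral_const_mul]
    apply intervalIntegral.integral_congr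
    intro ψ _
    show Real.sin (Real.pi / 3 - ψ / 3) / D ψ + Real.sin (Real.pi / 3 + ψ / 3) / D ψ
      = Real.sqrt 3 * (Real.cos (ψ / 3) / D ψ)
    rw [← add_div]
    have : Real.sin (Real.pi / 3 - ψ / 3) + Real.sin (Real.pi / 3 + ψ / 3)
        = Real.sqrt 3 * Real.cos (ψ / 3) := by
      rw [Real.sin_sub, Real.sin_add, Real.sin_pi_div_three]
      ring
    rw [this, mul_div_assoc]
  rw [step1, step2, ← mul_assoc, ← Real.sqrt_mul (by norm_num : (0:ℝ) ≤ 2/3)]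
  norm_num
  rfl
end

section
/- For 0 < α < π/2 and κ = sin α, ∫₀^{π/2} cos((1/3)·arcsin(κ sin t)) / √(1 − κ² sin² t) dt = √6 · ∫_{cos((π+α)/3)}^{cos((π−α)/3)} 1 / √(T₆(x) − cos 2α) dx, where T₆ is the degree-six Chebyshev polynomial of the first kind (so T₆(cos t) = cos 6t). -/
open Real intervalIntegral Polynomial
open Set MeasureTheory


noncomputable section Stmt8Aux

variable (κ : ℝ)

/-- auxiliary: `u` -/
def stmt8u (t : ℝ) : ℝ := Real.arcsin (κ * Real.sin t)

/-- auxiliary: `g` -/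
def stmt8g (t : ℝ) : ℝ := Real.cos ((Real.pi - stmt8u κ t) / 3)

/-- auxiliary: `g'` -/
def stmt8g' (t : ℝ) : ℝ :=
  Real.sin ((Real.pi - stmt8u κ t) / 3) / 3 *
    (κ * Real.cos t / Real.sqrt (1 - (κ * Real.sin t) ^ 2))

/-- auxiliary: `F` -/
def stmt8F (t : ℝ) : ℝ :=
  Real.sqrt 3 * Real.sin ((Real.pi - stmt8u κ t) / 3) /
    (3 * Real.sqrt (1 - κ ^ 2 * Real.sin t ^ 2))

variable {κ}

lemma stmt8_abs_le (hκ0 : 0 < κ) (hκ1 : κ < 1) (t : ℝ) : |κ * Real.sin t| ≤ κ := by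
  rw [abs_mul, abs_of_pos hκ0]
  nlinarith [abs_sin_le_one t, abs_nonneg (Real.sin t)]

lemma stmt8_sq_lt (hκ0 : 0 < κ) (hκ1 : κ < 1) (t : ℝ) : κ ^ 2 * Real.sin t ^ 2 < 1 := by
  nlinarith [Real.sin_sq_le_one t, sq_nonneg (Real.sin t)]

lemma stmt8_sqrt_pos (hκ0 : 0 < κ) (hκ1 : κ < 1) (t : ℝ) :
    0 < Real.sqrt (1 - κ ^ 2 * Real.sin t ^ 2) :=
  Real.sqrt_pos.2 (by linarith [stmt8_sq_lt hκ0 hκ1 t])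

lemma stmt8_ne_neg_one (hκ0 : 0 < κ) (hκ1 : κ < 1) (t : ℝ) : κ * Real.sin t ≠ -1 := by
  have := stmt8_abs_le hκ0 hκ1 t
  intro h; rw [h] at this; simp at this; linarith

lemma stmt8_ne_one (hκ0 : 0 < κ) (hκ1 : κ < 1) (t : ℝ) : κ * Real.sin t ≠ 1 := by
  have := stmt8_abs_le hκ0 hκ1 t
  intro h; rw [h] at this; simp at this; linarith

lemma stmt8_hasDerivAt_u (hκ0 : 0 < κ) (hκ1 : κ < 1) (t : ℝ) :
    HasDerivAt (stmt8u κ) (κ * Real.cos t / Real.sqrt (1 - (κ * Real.sin t) ^ 2)) t := by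
  have h1 : HasDerivAt (fun t : ℝ => κ * Real.sin t) (κ * Real.cos t) t :=
    (Real.hasDerivAt_sin t).const_mul κ
  have h2 := (Real.hasDerivAt_arcsin (stmt8_ne_neg_one hκ0 hκ1 t)
    (stmt8_ne_one hκ0 hκ1 t)).comp t h1
  exact h2.congr_deriv (by ring)

lemma stmt8_hasDerivAt_g (hκ0 : 0 < κ) (hκ1 : κ < 1) (t : ℝ) :
    HasDerivAt (stmt8g κ) (stmt8g' κ t) t := by
  have h1 : HasDerivAt (fun t : ℝ => (Real.pi - stmt8u κ t) / 3)
      (-(κ * Real.cos t / Real.sqrt (1 - (κ * Real.sin t) ^ 2)) / 3) t :=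
    ((stmt8_hasDerivAt_u hκ0 hκ1 t).const_sub Real.pi).div_const 3
  have h2 := (Real.hasDerivAt_cos ((Real.pi - stmt8u κ t) / 3)).comp t h1
  exact h2.congr_deriv (by unfold stmt8g'; ring)

lemma stmt8_u_mem (t : ℝ) : stmt8u κ t ∈ Icc (-(Real.pi / 2)) (Real.pi / 2) :=
  Real.arcsin_mem_Icc _

lemma stmt8_sin_pos (t : ℝ) : 0 < Real.sin ((Real.pi - stmt8u κ t) / 3) := by
  have h := stmt8_u_mem (κ := κ) t
  have hπ := Real.pi_pos
  apply Real.sin_pos_of_pos_of_lt_pi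
  · have := h.2; simp only [mem_Icc] at h; linarith [h.2]
  · simp only [mem_Icc] at h; linarith [h.1]

lemma stmt8_g'_pos (hκ0 : 0 < κ) (hκ1 : κ < 1) {t : ℝ}
    (ht : t ∈ Ioo (-(Real.pi / 2)) (Real.pi / 2)) : 0 < stmt8g' κ t := by
  have hc : 0 < Real.cos t := Real.cos_pos_of_mem_Ioo ht
  have hs := stmt8_sin_pos (κ := κ) t
  have hq : 0 < Real.sqrt (1 - (κ * Real.sin t) ^ 2) := by
    have := stmt8_sqrt_pos hκ0 hκ1 t
    rw [mul_pow]; exact this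
  unfold stmt8g'
  positivity

lemma stmt8_cont_g : Continuous (stmt8g κ) := by
  unfold stmt8g stmt8u
  exact Real.continuous_cos.comp (((continuous_const.sub
    (Real.continuous_arcsin.comp (continuous_const.mul Real.continuous_sin))).div_const 3))

lemma stmt8_strictMono (hκ0 : 0 < κ) (hκ1 : κ < 1) :
    StrictMonoOn (stmt8g κ) (Icc (-(Real.pi / 2)) (Real.pi / 2)) := by
  apply strictMonoOn_of_hasDerivWithinAt_pos (f' := stmt8g' κ) (convex_Icc _ _)
    stmt8_cont_g.continuousOn
  · intro x hx
    exact (stmt8_hasDerivAt_g hκ0 hκ1 x).hasDerivWithinAt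
  · intro x hx
    rw [interior_Icc] at hx
    exact stmt8_g'_pos hκ0 hκ1 hx


lemma stmt8_u_at_left {α : ℝ} (hα0 : 0 < α) (hα1 : α < Real.pi / 2) :
    stmt8u (Real.sin α) (-(Real.pi / 2)) = -α := by
  unfold stmt8u
  rw [Real.sin_neg, Real.sin_pi_div_two, mul_neg_one, Real.arcsin_neg,
    Real.arcsin_sin (by linarith) (by linarith)]

lemma stmt8_u_at_right {α : ℝ} (hα0 : 0 < α) (hα1 : α < Real.pi / 2) :
    stmt8u (Real.sin α) (Real.pi / 2) = α := by
  unfold stmt8u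
  rw [Real.sin_pi_div_two, mul_one, Real.arcsin_sin (by linarith) (by linarith)]

lemma stmt8_image (hκ0 : 0 < κ) (hκ1 : κ < 1) :
    stmt8g κ '' Ioo (-(Real.pi / 2)) (Real.pi / 2) =
      Ioo (stmt8g κ (-(Real.pi / 2))) (stmt8g κ (Real.pi / 2)) := by
  have hπ := Real.pi_pos
  have hab : -(Real.pi / 2) ≤ Real.pi / 2 := by linarith
  apply Subset.antisymm
  · rintro x ⟨t, ht, rfl⟩
    have hmono := stmt8_strictMono hκ0 hκ1 (κ := κ)
    constructor
    · exact hmono (left_mem_Icc.2 hab) (Ioo_subset_Icc_self ht) ht.1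
    · exact hmono (Ioo_subset_Icc_self ht) (right_mem_Icc.2 hab) ht.2
  · exact intermediate_value_Ioo hab stmt8_cont_g.continuousOn

lemma stmt8_sin_u (hκ0 : 0 < κ) (hκ1 : κ < 1) (t : ℝ) :
    Real.sin (stmt8u κ t) = κ * Real.sin t := by
  have h := stmt8_abs_le hκ0 hκ1 t
  rw [abs_le] at h
  exact Real.sin_arcsin (by linarith) (by linarith)

lemma stmt8_T_eval {α : ℝ} (hα0 : 0 < α) (hα1 : α < Real.pi / 2) (hκ : κ = Real.sin α)
    (hκ0 : 0 < κ) (hκ1 : κ < 1) (t : ℝ) :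
    (Polynomial.Chebyshev.T ℝ 6).eval (stmt8g κ t) - Real.cos (2 * α) =
      2 * κ ^ 2 * Real.cos t ^ 2 := by
  unfold stmt8g
  have h1 : (Polynomial.Chebyshev.T ℝ 6).eval (Real.cos ((Real.pi - stmt8u κ t) / 3)) =
      Real.cos ((6 : ℤ) * ((Real.pi - stmt8u κ t) / 3)) :=
    Polynomial.Chebyshev.T_real_cos _ 6
  rw [h1]
  push_cast
  have h2 : (6 : ℝ) * ((Real.pi - stmt8u κ t) / 3) = 2 * Real.pi - 2 * stmt8u κ t := by ring
  rw [h2, Real.cos_sub, Real.cos_two_pi, Real.sin_two_pi]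
  have h3 : Real.cos (2 * stmt8u κ t) = 1 - 2 * Real.sin (stmt8u κ t) ^ 2 := by
    have := Real.cos_two_mul (stmt8u κ t)
    have := Real.sin_sq_add_cos_sq (stmt8u κ t)
    linarith
  have h4 : Real.cos (2 * α) = 1 - 2 * Real.sin α ^ 2 := by
    have := Real.cos_two_mul α
    have := Real.sin_sq_add_cos_sq α
    linarith
  rw [h3, h4, stmt8_sin_u hκ0 hκ1 t, hκ]
  have := Real.sin_sq_add_cos_sq t
  nlinarith [this]

lemma stmt8_key {α : ℝ} (hα0 : 0 < α) (hα1 : α < Real.pi / 2) (hκ : κ = Real.sin α)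
    (hκ0 : 0 < κ) (hκ1 : κ < 1) {t : ℝ}
    (ht : t ∈ Ioo (-(Real.pi / 2)) (Real.pi / 2)) :
    Real.sqrt 6 * (|stmt8g' κ t| *
      (1 / Real.sqrt ((Polynomial.Chebyshev.T ℝ 6).eval (stmt8g κ t) - Real.cos (2 * α)))) =
      stmt8F κ t := by
  have hc : 0 < Real.cos t := Real.cos_pos_of_mem_Ioo ht
  have hq : 0 < Real.sqrt (1 - κ ^ 2 * Real.sin t ^ 2) := stmt8_sqrt_pos hκ0 hκ1 t
  rw [abs_of_pos (stmt8_g'_pos hκ0 hκ1 ht), stmt8_T_eval hα0 hα1 hκ hκ0 hκ1 t]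
  have h5 : Real.sqrt (2 * κ ^ 2 * Real.cos t ^ 2) = Real.sqrt 2 * (κ * Real.cos t) := by
    rw [show 2 * κ ^ 2 * Real.cos t ^ 2 = 2 * (κ * Real.cos t) ^ 2 by ring,
      Real.sqrt_mul (by norm_num), Real.sqrt_sq (by positivity)]
  rw [h5]
  unfold stmt8g' stmt8F
  rw [mul_pow]
  have h6 : Real.sqrt 6 = Real.sqrt 2 * Real.sqrt 3 := by
    rw [← Real.sqrt_mul (by norm_num)]; norm_num
  rw [h6]
  have h2 : (0:ℝ) < Real.sqrt 2 := by positivity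
  field_simp

lemma stmt8_symm (hκ0 : 0 < κ) (hκ1 : κ < 1) (t : ℝ) :
    stmt8F κ (-t) + stmt8F κ t =
      Real.cos ((1/3) * Real.arcsin (κ * Real.sin t)) /
        Real.sqrt (1 - κ ^ 2 * Real.sin t ^ 2) := by
  have hq : 0 < Real.sqrt (1 - κ ^ 2 * Real.sin t ^ 2) := stmt8_sqrt_pos hκ0 hκ1 t
  have hu : stmt8u κ (-t) = -stmt8u κ t := by
    unfold stmt8u; rw [Real.sin_neg, mul_neg, Real.arcsin_neg]
  unfold stmt8F
  rw [hu, Real.sin_neg]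
  have harg1 : (Real.pi - -stmt8u κ t) / 3 = Real.pi / 3 + stmt8u κ t / 3 := by ring
  have harg2 : (Real.pi - stmt8u κ t) / 3 = Real.pi / 3 - stmt8u κ t / 3 := by ring
  rw [harg1, harg2, Real.sin_add, Real.sin_sub, Real.sin_pi_div_three, Real.cos_pi_div_three]
  have h3 : Real.sqrt 3 * Real.sqrt 3 = 3 := Real.mul_self_sqrt (by norm_num)
  have hcos : Real.cos ((1/3) * stmt8u κ t) = Real.cos (stmt8u κ t / 3) := by ring_nf
  rw [show (-Real.sin t) ^ 2 = Real.sin t ^ 2 by ring]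
  have : Real.cos ((1/3) * Real.arcsin (κ * Real.sin t)) = Real.cos (stmt8u κ t / 3) := by
    unfold stmt8u; ring_nf
  rw [this]
  field_simp
  linear_combination (2 * Real.cos (stmt8u κ t / 3)) * h3

lemma stmt8_cont_F (hκ0 : 0 < κ) (hκ1 : κ < 1) : Continuous (stmt8F κ) := by
  unfold stmt8F stmt8u
  apply Continuous.div
  · exact continuous_const.mul (Real.continuous_sin.comp ((continuous_const.sub
      (Real.continuous_arcsin.comp (continuous_const.mul Real.continuous_sin))).div_const 3))
  · exact continuous_const.mul (Real.continuous_sqrt.comp (continuous_const.sub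
      (continuous_const.mul (Real.continuous_sin.pow 2))))
  · intro t
    have := stmt8_sqrt_pos hκ0 hκ1 t
    positivity

end Stmt8Aux

set_option maxHeartbeats 1000000 in

/-- For `0 < α < π/2` and `κ = sin α`,
`∫₀^{π/2} cos((1/3)·arcsin(κ sin t)) / √(1 − κ² sin² t) dt
  = √6 · ∫_{cos((π+α)/3)}^{cos((π−α)/3)} dx / √(T₆(x) − cos 2α)`,
where `T₆` is the degree-six Chebyshev polynomial of the first kind. -/
theorem stmt_8 (α : ℝ) (hα0 : 0 < α) (hα1 : α < Real.pi / 2) (κ : ℝ) (hκ : κ = Real.sin α) :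
    (∫ t in (0:ℝ)..(Real.pi / 2),
        Real.cos ((1/3) * Real.arcsin (κ * Real.sin t)) /
          Real.sqrt (1 - κ ^ 2 * Real.sin t ^ 2)) =
      Real.sqrt 6 * ∫ x in (Real.cos ((Real.pi + α) / 3))..(Real.cos ((Real.pi - α) / 3)),
        1 / Real.sqrt ((Polynomial.Chebyshev.T ℝ 6).eval x - Real.cos (2 * α)) := by
  have hπ := Real.pi_pos
  have hκ0 : 0 < κ := hκ ▸ Real.sin_pos_of_pos_of_lt_pi hα0 (by linarith)
  have hκ1 : κ < 1 := by
    rw [hκ, ← Real.sin_pi_div_two]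
    exact Real.strictMonoOn_sin ⟨by linarith, hα1.le⟩ ⟨by linarith, le_refl _⟩ hα1
  have hga : stmt8g κ (-(Real.pi / 2)) = Real.cos ((Real.pi + α) / 3) := by
    unfold stmt8g
    rw [hκ, stmt8_u_at_left hα0 hα1]
    congr 1; ring
  have hgb : stmt8g κ (Real.pi / 2) = Real.cos ((Real.pi - α) / 3) := by
    unfold stmt8g
    rw [hκ, stmt8_u_at_right hα0 hα1]
  have hle : Real.cos ((Real.pi + α) / 3) ≤ Real.cos ((Real.pi - α) / 3) :=
    Real.cos_le_cos_of_nonneg_of_le_pi (by linarith) (by linarith) (by linarith)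
  have hcF := stmt8_cont_F hκ0 hκ1
  set f : ℝ → ℝ := fun x =>
    1 / Real.sqrt ((Polynomial.Chebyshev.T ℝ 6).eval x - Real.cos (2 * α)) with hf
  symm
  calc Real.sqrt 6 * ∫ x in (Real.cos ((Real.pi + α) / 3))..(Real.cos ((Real.pi - α) / 3)), f x
      = Real.sqrt 6 * ∫ x in Ioo (stmt8g κ (-(Real.pi / 2))) (stmt8g κ (Real.pi / 2)), f x := by
        rw [intervalIntegral.integral_of_le hle, MeasureTheory.integral_Ioc_eq_integral_Ioo,
          hga, hgb]
    _ = Real.sqrt 6 * ∫ x in stmt8g κ '' Ioo (-(Real.pi / 2)) (Real.pi / 2), f x := by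
        rw [stmt8_image hκ0 hκ1]
    _ = Real.sqrt 6 * ∫ t in Ioo (-(Real.pi / 2)) (Real.pi / 2),
          |stmt8g' κ t| • f (stmt8g κ t) := by
        rw [MeasureTheory.integral_image_eq_integral_abs_deriv_smul measurableSet_Ioo
          (fun t _ => (stmt8_hasDerivAt_g hκ0 hκ1 t).hasDerivWithinAt)
          ((stmt8_strictMono hκ0 hκ1).injOn.mono Ioo_subset_Icc_self) f]
    _ = ∫ t in Ioo (-(Real.pi / 2)) (Real.pi / 2), stmt8F κ t := by
        rw [← MeasureTheory.integral_const_mul]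
        apply MeasureTheory.setIntegral_congr_fun measurableSet_Ioo
        intro t ht
        simpa [hf, smul_eq_mul] using stmt8_key hα0 hα1 hκ hκ0 hκ1 ht
    _ = ∫ t in (-(Real.pi / 2))..(Real.pi / 2), stmt8F κ t := by
        rw [intervalIntegral.integral_of_le (by linarith),
          MeasureTheory.integral_Ioc_eq_integral_Ioo]
    _ = (∫ t in (-(Real.pi / 2))..(0:ℝ), stmt8F κ t)
          + ∫ t in (0:ℝ)..(Real.pi / 2), stmt8F κ t :=
        (intervalIntegral.integral_add_adjacent_intervals
          (hcF.intervalIntegrable _ _) (hcF.intervalIntegrable _ _)).symm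
    _ = (∫ t in (0:ℝ)..(Real.pi / 2), stmt8F κ (-t))
          + ∫ t in (0:ℝ)..(Real.pi / 2), stmt8F κ t := by
        congr 1
        have := intervalIntegral.integral_comp_neg (a := (0:ℝ)) (b := Real.pi / 2)
          (f := stmt8F κ)
        simpa using this.symm
    _ = ∫ t in (0:ℝ)..(Real.pi / 2), (stmt8F κ (-t) + stmt8F κ t) := by
        have h1 : IntervalIntegrable (fun t => stmt8F κ (-t)) MeasureTheory.volume
            0 (Real.pi / 2) := (hcF.comp continuous_neg).intervalIntegrable _ _
        exact (intervalIntegral.integral_add h1 (hcF.intervalIntegrable _ _)).symm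
    _ = ∫ t in (0:ℝ)..(Real.pi / 2),
          Real.cos ((1/3) * Real.arcsin (κ * Real.sin t)) /
            Real.sqrt (1 - κ ^ 2 * Real.sin t ^ 2) := by
        apply intervalIntegral.integral_congr
        intro t _
        exact stmt8_symm hκ0 hκ1 t
end

section
/- Let 0 < κ < 1 and λ² = 1 − κ². Let U ⊆ ℝ be an open set and δ : U → ℝ a differentiable function with δ(u) ≠ 1 for all u ∈ U, satisfying 9 (deriv δ)² = 4 (1 − δ)(δ³ + 3δ² − 4λ²) on U. Define p : U → ℝ by p = −1/3 + (4κ²/9) / (1 − δ). Then p is differentiable on U and satisfies (deriv p)² = 4p³ − g₂ p − g₃ on U, where g₂ = (4/27)(8λ² + 1) and g₃ = (8/729)(8λ⁴ + 20λ² − 1). -/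
open Real

/-- Let `0 < κ < 1`, `λ² = 1 − κ²`, `U ⊆ ℝ` open, and `δ` differentiable on `U` with
`δ ≠ 1` on `U` and `9(δ′)² = 4(1 − δ)(δ³ + 3δ² − 4λ²)` on `U`. Then
`p = −1/3 + (4κ²/9)/(1 − δ)` is differentiable on `U` and satisfies
`(p′)² = 4p³ − g₂ p − g₃` on `U`, where `g₂ = (4/27)(8λ² + 1)` and
`g₃ = (8/729)(8λ⁴ + 20λ² − 1)`. -/
theorem stmt_10 (κ l : ℝ) (hκ0 : 0 < κ) (hκ1 : κ < 1) (hl : l ^ 2 = 1 - κ ^ 2)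
    (U : Set ℝ) (hU : IsOpen U) (δ : ℝ → ℝ)
    (hdiff : ∀ u ∈ U, DifferentiableAt ℝ δ u)
    (hne : ∀ u ∈ U, δ u ≠ 1)
    (hode : ∀ u ∈ U,
      9 * (deriv δ u) ^ 2 = 4 * (1 - δ u) * (δ u ^ 3 + 3 * δ u ^ 2 - 4 * l ^ 2))
    (p : ℝ → ℝ) (hp : p = fun u => -1/3 + (4 * κ ^ 2 / 9) / (1 - δ u)) :
    ∀ u ∈ U, DifferentiableAt ℝ p u ∧
      (deriv p u) ^ 2 =
        4 * p u ^ 3 - (4/27 * (8 * l ^ 2 + 1)) * p u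
          - 8/729 * (8 * l ^ 4 + 20 * l ^ 2 - 1) := by
  intro u hu
  have hd := hdiff u hu
  have h1 : (1 : ℝ) - δ u ≠ 0 := sub_ne_zero.mpr fun h => hne u hu h.symm
  have hκ2 : κ ^ 2 = 1 - l ^ 2 := by linarith
  have H : HasDerivAt p
      (0 + (0 * (1 - δ u) - (4 * κ ^ 2 / 9) * (0 - deriv δ u)) / (1 - δ u) ^ 2) u := by
    rw [hp]
    exact ((hasDerivAt_const u (-1/3 : ℝ))).add
      (((hasDerivAt_const u (4 * κ ^ 2 / 9)).div
        ((hasDerivAt_const u (1 : ℝ)).sub hd.hasDerivAt) h1))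
  refine ⟨H.differentiableAt, ?_⟩
  rw [H.deriv, hp]
  simp only
  have hode' := hode u hu
  have hD : (deriv δ u) ^ 2 = 4 / 9 * (1 - δ u) * (δ u ^ 3 + 3 * δ u ^ 2 - 4 * l ^ 2) := by
    linarith
  rw [hκ2]
  field_simp
  linear_combination (76527504 * (1 - l ^ 2) ^ 2) * hD
end

section
/- Let 0 < κ < 1 and λ² = 1 − κ². Let U ⊆ ℝ be an open set and W : U → ℝ a differentiable function with W(u) ≠ −1 for all u ∈ U, satisfying (deriv W)² = 8 (W + 1)(4W³ − 3W − (1 − 2κ²)) on U. Define P : U → ℝ by P = 6 − 4λ² / (1 + W). Then P is differentiable on U and satisfies (deriv P)² = 4P³ − G₂ P − G₃ on U, where G₂ = 48(1 + 8κ²) and G₃ = 64(1 − 20κ² − 8κ⁴). -/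
open Real

/-- Let `0 < κ < 1`, `λ² = 1 − κ²`, `U ⊆ ℝ` open, and `W` differentiable on `U` with
`W ≠ −1` on `U` and `(W′)² = 8(W + 1)(4W³ − 3W − (1 − 2κ²))` on `U`. Then
`P = 6 − 4λ²/(1 + W)` is differentiable on `U` and satisfies
`(P′)² = 4P³ − G₂ P − G₃` on `U`, where `G₂ = 48(1 + 8κ²)` and
`G₃ = 64(1 − 20κ² − 8κ⁴)`. -/
theorem stmt_11 (κ l : ℝ) (hκ0 : 0 < κ) (hκ1 : κ < 1) (hl : l ^ 2 = 1 - κ ^ 2)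
    (U : Set ℝ) (hU : IsOpen U) (W : ℝ → ℝ)
    (hdiff : ∀ u ∈ U, DifferentiableAt ℝ W u)
    (hne : ∀ u ∈ U, W u ≠ -1)
    (hode : ∀ u ∈ U,
      (deriv W u) ^ 2 =
        8 * (W u + 1) * (4 * W u ^ 3 - 3 * W u - (1 - 2 * κ ^ 2)))
    (P : ℝ → ℝ) (hP : P = fun u => 6 - 4 * l ^ 2 / (1 + W u)) :
    ∀ u ∈ U, DifferentiableAt ℝ P u ∧
      (deriv P u) ^ 2 =
        4 * P u ^ 3 - (48 * (1 + 8 * κ ^ 2)) * P u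
          - 64 * (1 - 20 * κ ^ 2 - 8 * κ ^ 4) := by
  intro u hu
  have hW : HasDerivAt W (deriv W u) u := (hdiff u hu).hasDerivAt
  have hne' : (1 : ℝ) + W u ≠ 0 := by
    intro h; exact hne u hu (by linarith)
  have hden : HasDerivAt (fun u => 1 + W u) (deriv W u) u := by
    simpa using (hW.const_add 1)
  have hdiv : HasDerivAt (fun u => 4 * l ^ 2 / (1 + W u))
      ((0 * (1 + W u) - 4 * l ^ 2 * deriv W u) / (1 + W u) ^ 2) u :=
    (hasDerivAt_const u (4 * l ^ 2)).div hden hne'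
  have hPderiv : HasDerivAt P
      (4 * l ^ 2 * deriv W u / (1 + W u) ^ 2) u := by
    rw [hP]
    have := (hasDerivAt_const u (6 : ℝ)).sub hdiv
    exact this.congr_deriv (by ring)
  refine ⟨hPderiv.differentiableAt, ?_⟩
  rw [hPderiv.deriv, hP]
  simp only
  have hode' := hode u hu
  have h2 : ((1 : ℝ) + W u) ^ 2 ≠ 0 := pow_ne_zero _ hne'
  rw [hl] at *
  field_simp
  linear_combination (16 * (1 - κ ^ 2) ^ 2) * hode'
end

section
/- For 0 < α < π/2, ∫_{cos(2(π+α)/3)}^{cos(2(π−α)/3)} 1 / √(8 (W + 1)(4W³ − 3W − cos 2α)) dW = (1/√6) · ∫₀^{π/2} cos((1/3)·arcsin(sin α · sin t)) / √(1 − sin² α · sin² t) dt. -/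
open Real intervalIntegral
open Real intervalIntegral

noncomputable def thf (κ s : ℝ) : ℝ := Real.arcsin (κ * Real.sin s)
noncomputable def phf (κ s : ℝ) : ℝ := Real.cos (2 * (Real.pi - thf κ s) / 3)
noncomputable def thD (κ s : ℝ) : ℝ := κ * Real.cos s / Real.sqrt (1 - (κ * Real.sin s) ^ 2)
noncomputable def phD (κ s : ℝ) : ℝ :=
  2 / 3 * Real.sin (2 * (Real.pi - thf κ s) / 3) * thD κ s
noncomputable def Fa (κ s : ℝ) : ℝ :=
  Real.sin ((Real.pi - thf κ s) / 3) / (3 * Real.sqrt 2 * Real.sqrt (1 - κ ^ 2 * Real.sin s ^ 2))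

lemma abs_arg_lt {κ : ℝ} (hκ : |κ| < 1) (s : ℝ) : |κ * Real.sin s| < 1 := by
  rw [abs_mul]
  calc |κ| * |Real.sin s| ≤ |κ| * 1 := by
        gcongr
        exact abs_le.mpr ⟨Real.neg_one_le_sin s, Real.sin_le_one s⟩
    _ < 1 := by simpa using hκ

lemma hasDerivAt_thf {κ : ℝ} (hκ : |κ| < 1) (s : ℝ) : HasDerivAt (thf κ) (thD κ s) s := by
  obtain ⟨h1, h2⟩ := abs_lt.mp (abs_arg_lt hκ s)
  have := (Real.hasDerivAt_arcsin (ne_of_gt h1) (ne_of_lt h2)).comp s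
    ((Real.hasDerivAt_sin s).const_mul κ)
  refine this.congr_deriv ?_
  unfold thD
  ring

lemma hasDerivAt_phf {κ : ℝ} (hκ : |κ| < 1) (s : ℝ) : HasDerivAt (phf κ) (phD κ s) s := by
  have h1 := hasDerivAt_thf hκ s
  have h2 : HasDerivAt (fun s => 2 * (Real.pi - thf κ s) / 3) (-(2 / 3) * thD κ s) s := by
    have := ((h1.const_sub Real.pi).const_mul 2).div_const 3
    refine this.congr_deriv ?_
    ring
  have := (Real.hasDerivAt_cos _).comp s h2
  refine this.congr_deriv ?_
  unfold phD
  ring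

lemma thf_mem {κ : ℝ} (hκ : |κ| < 1) (s : ℝ) :
    thf κ s ∈ Set.Ioo (-(Real.pi / 2)) (Real.pi / 2) := by
  obtain ⟨h1, h2⟩ := abs_lt.mp (abs_arg_lt hκ s)
  exact ⟨Real.neg_pi_div_two_lt_arcsin.2 h1, Real.arcsin_lt_pi_div_two.2 h2⟩

lemma phf_mono {κ : ℝ} (hκ0 : 0 < κ) (hκ1 : κ < 1) :
    StrictMonoOn (phf κ) (Set.Icc (-(Real.pi / 2)) (Real.pi / 2)) := by
  have hκa : |κ| < 1 := by rwa [abs_of_pos hκ0]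
  intro x hx y hy hxy
  have hsin : Real.sin x < Real.sin y := Real.strictMonoOn_sin hx hy hxy
  have hθ : thf κ x < thf κ y := by
    apply Real.strictMonoOn_arcsin
    · exact ⟨by linarith [(abs_lt.mp (abs_arg_lt hκa x)).1],
        by linarith [(abs_lt.mp (abs_arg_lt hκa x)).2]⟩
    · exact ⟨by linarith [(abs_lt.mp (abs_arg_lt hκa y)).1],
        by linarith [(abs_lt.mp (abs_arg_lt hκa y)).2]⟩
    · exact mul_lt_mul_of_pos_left hsin hκ0
  obtain ⟨hx1, hx2⟩ := thf_mem hκa x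
  obtain ⟨hy1, hy2⟩ := thf_mem hκa y
  have hπ := Real.pi_pos
  unfold phf
  apply Real.strictAntiOn_cos
  · constructor <;> [linarith; linarith]
  · constructor <;> [linarith; linarith]
  · linarith

lemma key_point {κ : ℝ} (hκ0 : 0 < κ) (hκ1 : κ < 1) {c : ℝ} (hc : c = 1 - 2 * κ ^ 2) {s : ℝ}
    (hs : s ∈ Set.Ioo (-(Real.pi / 2)) (Real.pi / 2)) :
    |phD κ s| * (1 / Real.sqrt (8 * (phf κ s + 1) * (4 * phf κ s ^ 3 - 3 * phf κ s - c)))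
      = Fa κ s := by
  obtain ⟨hs1, hs2⟩ := hs
  have hπ := Real.pi_pos
  have hC : 0 < Real.cos s := Real.cos_pos_of_mem_Ioo ⟨hs1, hs2⟩
  have hκa : |κ| < 1 := by rwa [abs_of_pos hκ0]
  obtain ⟨hθ1, hθ2⟩ := thf_mem hκa s
  have hsinθ : Real.sin (thf κ s) = κ * Real.sin s := by
    obtain ⟨h1, h2⟩ := abs_lt.mp (abs_arg_lt hκa s)
    exact Real.sin_arcsin h1.le h2.le
  have hx1 : 0 < (Real.pi - thf κ s) / 3 := by linarith
  have hx2 : (Real.pi - thf κ s) / 3 < Real.pi / 2 := by linarith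
  have hcx : 0 < Real.cos ((Real.pi - thf κ s) / 3) := Real.cos_pos_of_mem_Ioo ⟨by linarith, hx2⟩
  have hsx : 0 < Real.sin ((Real.pi - thf κ s) / 3) :=
    Real.sin_pos_of_pos_of_lt_pi hx1 (by linarith)
  have hDpos : 0 < 1 - κ ^ 2 * Real.sin s ^ 2 := by
    have hsq : Real.sin s ^ 2 ≤ 1 := Real.sin_sq_le_one s
    have hκsq : κ ^ 2 < 1 := by nlinarith
    nlinarith [sq_nonneg κ]
  have hD : 0 < Real.sqrt (1 - κ ^ 2 * Real.sin s ^ 2) := Real.sqrt_pos.mpr hDpos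
  have hph : phf κ s = Real.cos (2 * ((Real.pi - thf κ s) / 3)) := by
    unfold phf; congr 1; ring
  have e1 : phf κ s + 1 = 2 * Real.cos ((Real.pi - thf κ s) / 3) ^ 2 := by
    rw [hph, Real.cos_two_mul]; ring
  have e2 : 4 * phf κ s ^ 3 - 3 * phf κ s - c = 2 * κ ^ 2 * Real.cos s ^ 2 := by
    have h3 : Real.cos (3 * (2 * ((Real.pi - thf κ s) / 3)))
        = 4 * Real.cos (2 * ((Real.pi - thf κ s) / 3)) ^ 3
          - 3 * Real.cos (2 * ((Real.pi - thf κ s) / 3)) := Real.cos_three_mul _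
    have h4 : (3 : ℝ) * (2 * ((Real.pi - thf κ s) / 3)) = 2 * Real.pi - 2 * thf κ s := by ring
    have h5 : Real.cos (2 * Real.pi - 2 * thf κ s) = Real.cos (2 * thf κ s) := by
      rw [Real.cos_sub, Real.cos_two_pi, Real.sin_two_pi]; ring
    have h6 : Real.cos (2 * thf κ s) = 1 - 2 * (κ * Real.sin s) ^ 2 := by
      rw [Real.cos_two_mul, ← hsinθ]
      linear_combination 2 * Real.sin_sq_add_cos_sq (thf κ s)
    rw [hph, hc, ← h3, h4, h5, h6]
    linear_combination (-2 * κ ^ 2) * Real.sin_sq_add_cos_sq s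
  have e3 : Real.sqrt (8 * (phf κ s + 1) * (4 * phf κ s ^ 3 - 3 * phf κ s - c))
      = 4 * Real.sqrt 2 * κ * Real.cos ((Real.pi - thf κ s) / 3) * Real.cos s := by
    rw [e1, e2]
    have h2 : Real.sqrt 2 ^ 2 = 2 := Real.sq_sqrt (by norm_num)
    rw [show (8 : ℝ) * (2 * Real.cos ((Real.pi - thf κ s) / 3) ^ 2) * (2 * κ ^ 2 * Real.cos s ^ 2)
        = (4 * Real.sqrt 2 * κ * Real.cos ((Real.pi - thf κ s) / 3) * Real.cos s) ^ 2 by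
      linear_combination (-16 * κ ^ 2 * Real.cos ((Real.pi - thf κ s) / 3) ^ 2
        * Real.cos s ^ 2) * h2]
    exact Real.sqrt_sq (by positivity)
  have e4 : phD κ s = 2 / 3 * (2 * Real.sin ((Real.pi - thf κ s) / 3)
      * Real.cos ((Real.pi - thf κ s) / 3))
      * (κ * Real.cos s / Real.sqrt (1 - κ ^ 2 * Real.sin s ^ 2)) := by
    unfold phD thD
    rw [show 2 * (Real.pi - thf κ s) / 3 = 2 * ((Real.pi - thf κ s) / 3) by ring,
      Real.sin_two_mul, show 1 - (κ * Real.sin s) ^ 2 = 1 - κ ^ 2 * Real.sin s ^ 2 by ring]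
  have e5 : 0 < phD κ s := by
    rw [e4]; positivity
  rw [abs_of_pos e5, e4, e3]
  unfold Fa
  have h2 : Real.sqrt 2 ≠ 0 := by positivity
  field_simp
  ring
lemma Fa_symm_add {κ : ℝ} (hκ0 : 0 < κ) (hκ1 : κ < 1) (t : ℝ) :
    Fa κ (-t) + Fa κ t
      = (1 / Real.sqrt 6) * (Real.cos ((1 / 3) * Real.arcsin (κ * Real.sin t))
          / Real.sqrt (1 - κ ^ 2 * Real.sin t ^ 2)) := by
  have hθneg : thf κ (-t) = -thf κ t := by
    unfold thf; rw [Real.sin_neg, mul_neg, Real.arcsin_neg]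
  have hDpos : 0 < 1 - κ ^ 2 * Real.sin t ^ 2 := by
    have hsq : Real.sin t ^ 2 ≤ 1 := Real.sin_sq_le_one t
    have hκsq : κ ^ 2 < 1 := by nlinarith
    nlinarith [sq_nonneg κ]
  have hD : 0 < Real.sqrt (1 - κ ^ 2 * Real.sin t ^ 2) := Real.sqrt_pos.mpr hDpos
  have h2 : (0:ℝ) < Real.sqrt 2 := by positivity
  have h3 : (0:ℝ) < Real.sqrt 3 := by positivity
  have h32 : Real.sqrt 3 ^ 2 = 3 := Real.sq_sqrt (by norm_num)
  have h6 : Real.sqrt 6 = Real.sqrt 2 * Real.sqrt 3 := by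
    rw [← Real.sqrt_mul (by norm_num) 3]; norm_num
  unfold Fa
  rw [hθneg, Real.sin_neg, show (-Real.sin t) ^ 2 = Real.sin t ^ 2 by ring]
  have harc : (1 / 3) * Real.arcsin (κ * Real.sin t) = thf κ t / 3 := by unfold thf; ring
  rw [harc, show (Real.pi - -thf κ t) / 3 = Real.pi / 3 + thf κ t / 3 by ring,
    show (Real.pi - thf κ t) / 3 = Real.pi / 3 - thf κ t / 3 by ring,
    Real.sin_add, Real.sin_sub, Real.sin_pi_div_three, h6]
  field_simp
  linear_combination (2 * Real.cos (thf κ t / 3)) * h32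

lemma Fa_cont {κ : ℝ} (hκ0 : 0 < κ) (hκ1 : κ < 1) : Continuous (Fa κ) := by
  have hDpos : ∀ s : ℝ, 0 < 1 - κ ^ 2 * Real.sin s ^ 2 := by
    intro s
    have hsq : Real.sin s ^ 2 ≤ 1 := Real.sin_sq_le_one s
    have hκsq : κ ^ 2 < 1 := by nlinarith
    nlinarith [sq_nonneg κ]
  unfold Fa thf
  apply Continuous.div
  · exact Real.continuous_sin.comp
      ((continuous_const.sub (Real.continuous_arcsin.comp
        (continuous_const.mul Real.continuous_sin))).div_const 3)
  · exact continuous_const.mul (Real.continuous_sqrt.comp (by fun_prop))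
  · intro s
    have := Real.sqrt_pos.mpr (hDpos s)
    positivity

/-- For `0 < α < π/2`,
`∫_{cos(2(π+α)/3)}^{cos(2(π−α)/3)} dW / √(8(W+1)(4W³ − 3W − cos 2α))
  = (1/√6) · ∫₀^{π/2} cos((1/3)·arcsin(sin α · sin t)) / √(1 − sin²α sin²t) dt`. -/
theorem stmt_14 (α : ℝ) (hα0 : 0 < α) (hα1 : α < Real.pi / 2) :
    (∫ W in (Real.cos (2 * (Real.pi + α) / 3))..(Real.cos (2 * (Real.pi - α) / 3)),
        1 / Real.sqrt (8 * (W + 1) * (4 * W ^ 3 - 3 * W - Real.cos (2 * α)))) =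
      (1 / Real.sqrt 6) * ∫ t in (0:ℝ)..(Real.pi / 2),
        Real.cos ((1/3) * Real.arcsin (Real.sin α * Real.sin t)) /
          Real.sqrt (1 - Real.sin α ^ 2 * Real.sin t ^ 2) := by
  have hπ := Real.pi_pos
  set κ := Real.sin α with hκdef
  have hκ0 : 0 < κ := Real.sin_pos_of_pos_of_lt_pi hα0 (by linarith)
  have hκ1 : κ < 1 := by
    have h := Real.strictMonoOn_sin (a := α) (b := Real.pi / 2)
      ⟨by linarith, hα1.le⟩ ⟨by linarith, le_refl _⟩ hα1
    rwa [Real.sin_pi_div_two] at h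
  have hκa : |κ| < 1 := by rwa [abs_of_pos hκ0]
  have hθpos : thf κ (Real.pi / 2) = α := by
    unfold thf
    rw [Real.sin_pi_div_two, mul_one, hκdef, Real.arcsin_sin (by linarith) (by linarith)]
  have hθneg : thf κ (-(Real.pi / 2)) = -α := by
    unfold thf
    rw [Real.sin_neg, Real.sin_pi_div_two, mul_neg, mul_one, Real.arcsin_neg, hκdef,
      Real.arcsin_sin (by linarith) (by linarith)]
  have hb : phf κ (Real.pi / 2) = Real.cos (2 * (Real.pi - α) / 3) := by
    unfold phf; rw [hθpos]
  have ha : phf κ (-(Real.pi / 2)) = Real.cos (2 * (Real.pi + α) / 3) := by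
    unfold phf; rw [hθneg]; congr 1; ring
  have hmono := phf_mono hκ0 hκ1
  have hmem1 : -(Real.pi / 2) ∈ Set.Icc (-(Real.pi / 2)) (Real.pi / 2) := ⟨le_refl _, by linarith⟩
  have hmem2 : Real.pi / 2 ∈ Set.Icc (-(Real.pi / 2)) (Real.pi / 2) := ⟨by linarith, le_refl _⟩
  have hab : phf κ (-(Real.pi / 2)) < phf κ (Real.pi / 2) := hmono hmem1 hmem2 (by linarith)
  have hcont : Continuous (phf κ) := by
    unfold phf thf
    exact Real.continuous_cos.comp ((continuous_const.mul (continuous_const.sub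
      (Real.continuous_arcsin.comp (continuous_const.mul Real.continuous_sin)))).div_const 3)
  have himg : phf κ '' Set.Icc (-(Real.pi / 2)) (Real.pi / 2)
      = Set.Icc (phf κ (-(Real.pi / 2))) (phf κ (Real.pi / 2)) := by
    apply Set.Subset.antisymm
    · rintro _ ⟨z, hz, rfl⟩
      exact ⟨hmono.monotoneOn hmem1 hz hz.1, hmono.monotoneOn hz hmem2 hz.2⟩
    · exact intermediate_value_Icc (by linarith) hcont.continuousOn
  have hcos2α : Real.cos (2 * α) = 1 - 2 * κ ^ 2 := by
    rw [Real.cos_two_mul, hκdef]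
    linear_combination 2 * Real.sin_sq_add_cos_sq α
  rw [← ha, ← hb, intervalIntegral.integral_of_le hab.le,
    ← MeasureTheory.integral_Icc_eq_integral_Ioc, ← himg,
    MeasureTheory.integral_image_eq_integral_abs_deriv_smul measurableSet_Icc
      (fun x _ => (hasDerivAt_phf hκa x).hasDerivWithinAt) hmono.injOn _,
    MeasureTheory.integral_Icc_eq_integral_Ioo]
  have hstep : (∫ s in Set.Ioo (-(Real.pi / 2)) (Real.pi / 2),
      |phD κ s| • (1 / Real.sqrt (8 * (phf κ s + 1)
        * (4 * phf κ s ^ 3 - 3 * phf κ s - Real.cos (2 * α)))))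
      = ∫ s in Set.Ioo (-(Real.pi / 2)) (Real.pi / 2), Fa κ s :=
    MeasureTheory.setIntegral_congr_fun measurableSet_Ioo (fun s hs => by
      rw [smul_eq_mul]; exact key_point hκ0 hκ1 hcos2α hs)
  rw [hstep, ← MeasureTheory.integral_Ioc_eq_integral_Ioo,
    ← intervalIntegral.integral_of_le (by linarith : -(Real.pi / 2) ≤ Real.pi / 2)]
  have hFi : ∀ a b : ℝ, IntervalIntegrable (Fa κ) MeasureTheory.volume a b :=
    fun a b => (Fa_cont hκ0 hκ1).intervalIntegrable a b
  rw [← intervalIntegral.integral_add_adjacent_intervals (hFi (-(Real.pi / 2)) 0)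
    (hFi 0 (Real.pi / 2))]
  have hneg : (∫ s in (-(Real.pi / 2))..(0:ℝ), Fa κ s)
      = ∫ s in (0:ℝ)..(Real.pi / 2), Fa κ (-s) := by
    rw [intervalIntegral.integral_comp_neg]
    norm_num
  have hFin : IntervalIntegrable (fun s => Fa κ (-s)) MeasureTheory.volume 0 (Real.pi / 2) :=
    ((Fa_cont hκ0 hκ1).comp continuous_neg).intervalIntegrable _ _
  have hadd : ((∫ s in (0:ℝ)..(Real.pi / 2), Fa κ (-s)) + ∫ s in (0:ℝ)..(Real.pi / 2), Fa κ s)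
      = ∫ s in (0:ℝ)..(Real.pi / 2), (Fa κ (-s) + Fa κ s) :=
    (intervalIntegral.integral_add hFin (hFi _ _)).symm
  rw [hneg, hadd,
    intervalIntegral.integral_congr (g := fun t => (1 / Real.sqrt 6)
      * (Real.cos ((1 / 3) * Real.arcsin (κ * Real.sin t))
          / Real.sqrt (1 - κ ^ 2 * Real.sin t ^ 2)))
      (fun s _ => Fa_symm_add hκ0 hκ1 s),
    intervalIntegral.integral_const_mul]
end

section
/- For 0 < α < π/2, ∫_{cos(2(π−α)/3)}^{cos(2α/3)} 1 / √(8 (x + 1)(cos 2α + 3x − 4x³)) dx = (1/(3√2)) · ∫₀^{π/2} cos((1/3)·arcsin(cos α · sin t)) / √(1 − cos² α · sin² t) dt. -/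
open Real intervalIntegral

section Stmt15Aux

open MeasureTheory Set

private lemma s15_sin_sq_sub (φ a : ℝ) :
    Real.sin φ ^ 2 - Real.sin a ^ 2 = Real.sin (φ - a) * Real.sin (φ + a) := by
  rw [Real.sin_sub, Real.sin_add]
  nlinarith [Real.sin_sq_add_cos_sq φ, Real.sin_sq_add_cos_sq a]

private lemma s15_sin_lt_sin {α φ : ℝ} (hα0 : 0 < α) (hφ : φ ∈ Ioo α (π - α)) :
    Real.sin α < Real.sin φ := by
  have hπ := Real.pi_pos
  obtain ⟨h1, h2⟩ := hφ
  rcases le_or_gt φ (π / 2) with h | h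
  · exact Real.strictMonoOn_sin ⟨by linarith, by linarith⟩ ⟨by linarith, h⟩ h1
  · rw [← Real.sin_pi_sub φ]
    exact Real.strictMonoOn_sin ⟨by linarith, by linarith⟩
      ⟨by linarith, by linarith⟩ (by linarith)

private lemma s15_sq_pos {α φ : ℝ} (hα0 : 0 < α) (hφ : φ ∈ Ioo α (π - α)) :
    0 < Real.sin φ ^ 2 - Real.sin α ^ 2 := by
  have h1 : 0 < Real.sin α :=
    Real.sin_pos_of_pos_of_lt_pi hα0 (by nlinarith [Real.pi_pos, hφ.1, hφ.2])
  have h2 := s15_sin_lt_sin hα0 hφ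
  nlinarith

private lemma s15_sin_add_sin (A : ℝ) :
    Real.sin A + Real.sin (π / 3 - A) = Real.cos (π / 6 - A) := by
  rw [Real.sin_sub, Real.cos_sub, Real.sin_pi_div_three, Real.cos_pi_div_three,
    Real.sin_pi_div_six, Real.cos_pi_div_six]
  ring

private lemma s15_lhs_pointwise {α φ : ℝ} (hα0 : 0 < α) (hα1 : α < π / 2)
    (hd : 0 < Real.sin φ ^ 2 - Real.sin α ^ 2) (hφ0 : 0 < φ) (hφ1 : φ < π) :
    |(-Real.sin (2 * φ / 3)) * (2 / 3)| *
      (1 / Real.sqrt (8 * (Real.cos (2 * φ / 3) + 1) *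
        (Real.cos (2 * α) + 3 * Real.cos (2 * φ / 3) - 4 * Real.cos (2 * φ / 3) ^ 3)))
    = 1 / (3 * Real.sqrt 2) *
      (Real.sin (φ / 3) / Real.sqrt (Real.sin φ ^ 2 - Real.sin α ^ 2)) := by
  have hπ := Real.pi_pos
  set d := Real.sin φ ^ 2 - Real.sin α ^ 2 with hdd
  have hu0 : 0 < φ / 3 := by linarith
  have hu1 : φ / 3 < π / 2 := by linarith
  have hcos : 0 < Real.cos (φ / 3) := Real.cos_pos_of_mem_Ioo ⟨by linarith, hu1⟩
  have hsin : 0 < Real.sin (φ / 3) := Real.sin_pos_of_pos_of_lt_pi hu0 (by linarith)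
  have hsin2 : Real.sin (2 * φ / 3) = 2 * Real.sin (φ / 3) * Real.cos (φ / 3) := by
    rw [show 2 * φ / 3 = 2 * (φ / 3) by ring, Real.sin_two_mul]
  have hcos2 : Real.cos (2 * φ / 3) = 2 * Real.cos (φ / 3) ^ 2 - 1 := by
    rw [show 2 * φ / 3 = 2 * (φ / 3) by ring, Real.cos_two_mul]
  have htr : Real.cos (2 * φ) = 4 * Real.cos (2 * φ / 3) ^ 3 - 3 * Real.cos (2 * φ / 3) := by
    have h := Real.cos_three_mul (2 * φ / 3)
    rw [show (3:ℝ) * (2 * φ / 3) = 2 * φ by ring] at h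
    exact h
  have hbr : Real.cos (2 * α) + 3 * Real.cos (2 * φ / 3) - 4 * Real.cos (2 * φ / 3) ^ 3
      = 2 * d := by
    rw [Real.cos_two_mul α]
    have := htr
    rw [Real.cos_two_mul φ] at this
    have hφs := Real.sin_sq_add_cos_sq φ
    have hαs := Real.sin_sq_add_cos_sq α
    nlinarith [this]
  have h2 : Real.sqrt 2 ^ 2 = 2 := Real.sq_sqrt (by norm_num)
  have hsd : Real.sqrt d ^ 2 = d := Real.sq_sqrt hd.le
  have hsd0 : 0 < Real.sqrt d := Real.sqrt_pos.mpr hd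
  have h20 : 0 < Real.sqrt 2 := Real.sqrt_pos.mpr (by norm_num)
  have hkey : 8 * (Real.cos (2 * φ / 3) + 1) *
      (Real.cos (2 * α) + 3 * Real.cos (2 * φ / 3) - 4 * Real.cos (2 * φ / 3) ^ 3)
      = (4 * Real.sqrt 2 * Real.cos (φ / 3) * Real.sqrt d) ^ 2 := by
    rw [hbr, hcos2,
      show (4 * Real.sqrt 2 * Real.cos (φ / 3) * Real.sqrt d) ^ 2
        = 4 ^ 2 * Real.sqrt 2 ^ 2 * Real.cos (φ / 3) ^ 2 * Real.sqrt d ^ 2 from by ring,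
      h2, hsd]
    ring
  rw [hkey, Real.sqrt_sq (by positivity)]
  rw [abs_of_nonpos (by nlinarith [hsin2])]
  rw [hsin2]
  field_simp
  ring

private lemma s15_rhs_pointwise {α t : ℝ} (hα0 : 0 < α) (hα1 : α < π / 2)
    (ht : t ∈ Ioo (0:ℝ) (π / 2)) :
    |(-(1 / Real.sqrt (1 - (Real.cos α * Real.sin t) ^ 2))) * (Real.cos α * Real.cos t)| *
      (Real.cos (π / 6 - Real.arccos (Real.cos α * Real.sin t) / 3) /
        Real.sqrt (Real.sin (Real.arccos (Real.cos α * Real.sin t)) ^ 2 - Real.sin α ^ 2))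
    = Real.cos ((1/3) * Real.arcsin (Real.cos α * Real.sin t)) /
        Real.sqrt (1 - Real.cos α ^ 2 * Real.sin t ^ 2) := by
  have hπ := Real.pi_pos
  obtain ⟨ht0, ht1⟩ := ht
  set y := Real.cos α * Real.sin t with hy
  have hca : 0 < Real.cos α := Real.cos_pos_of_mem_Ioo ⟨by linarith, hα1⟩
  have hca1 : Real.cos α < 1 := by
    have := Real.strictAntiOn_cos ⟨le_refl 0, hπ.le⟩ ⟨hα0.le, by linarith⟩ hα0
    simpa using this
  have hst : 0 < Real.sin t := Real.sin_pos_of_pos_of_lt_pi ht0 (by linarith)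
  have hst1 : Real.sin t ≤ 1 := Real.sin_le_one t
  have hct : 0 < Real.cos t := Real.cos_pos_of_mem_Ioo ⟨by linarith, ht1⟩
  have hy1 : y < 1 := by nlinarith
  have hy0 : 0 < y := by positivity
  have h1y : 0 < 1 - y ^ 2 := by nlinarith
  have hsqy : 0 < Real.sqrt (1 - y ^ 2) := Real.sqrt_pos.mpr h1y
  have hsinacos : Real.sin (Real.arccos y) = Real.sqrt (1 - y ^ 2) := Real.sin_arccos y
  have hkey : Real.sin (Real.arccos y) ^ 2 - Real.sin α ^ 2 = (Real.cos α * Real.cos t) ^ 2 := by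
    rw [hsinacos, Real.sq_sqrt h1y.le]
    have h1 := Real.sin_sq_add_cos_sq α
    have h2 := Real.sin_sq_add_cos_sq t
    rw [hy]; nlinarith
  have hcc : 0 < Real.cos α * Real.cos t := by positivity
  rw [hkey, Real.sqrt_sq hcc.le]
  have hang : π / 6 - Real.arccos y / 3 = 1/3 * Real.arcsin y := by
    rw [Real.arccos_eq_pi_div_two_sub_arcsin]; ring
  rw [hang]
  have h1y' : 1 - Real.cos α ^ 2 * Real.sin t ^ 2 = 1 - y ^ 2 := by rw [hy]; ring
  rw [h1y', abs_of_nonpos (by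
    have : 0 ≤ 1 / Real.sqrt (1 - y ^ 2) := by positivity
    nlinarith)]
  field_simp

private lemma s15_lhs_image {α : ℝ} (hα0 : 0 < α) (hα1 : α < π / 2) :
    (fun φ => Real.cos (2 * φ / 3)) '' Ioo α (π - α)
      = Ioo (Real.cos (2 * (π - α) / 3)) (Real.cos (2 * α / 3)) := by
  have hπ := Real.pi_pos
  apply Subset.antisymm
  · rintro _ ⟨φ, ⟨h1, h2⟩, rfl⟩
    constructor
    · exact Real.strictAntiOn_cos ⟨by linarith, by linarith⟩
        ⟨by linarith, by linarith⟩ (by linarith)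
    · exact Real.strictAntiOn_cos ⟨by linarith, by linarith⟩
        ⟨by linarith, by linarith⟩ (by linarith)
  · exact intermediate_value_Ioo' (f := fun φ => Real.cos (2 * φ / 3)) (a := α)
      (b := π - α) (by linarith)
      ((Real.continuous_cos.comp (by fun_prop)).continuousOn)

private lemma s15_rhs_image {α : ℝ} (hα0 : 0 < α) (hα1 : α < π / 2) :
    (fun t => Real.arccos (Real.cos α * Real.sin t)) '' Ioo (0:ℝ) (π / 2)
      = Ioo α (π / 2) := by
  have hπ := Real.pi_pos
  have hca : 0 < Real.cos α := Real.cos_pos_of_mem_Ioo ⟨by linarith, hα1⟩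
  have hca1 : Real.cos α < 1 := by
    have := Real.strictAntiOn_cos ⟨le_refl 0, hπ.le⟩ ⟨hα0.le, by linarith⟩ hα0
    simpa using this
  have hcont : Continuous fun t => Real.arccos (Real.cos α * Real.sin t) :=
    Real.continuous_arccos.comp (continuous_const.mul Real.continuous_sin)
  apply Subset.antisymm
  · rintro _ ⟨t, ⟨h1, h2⟩, rfl⟩
    have hst : 0 < Real.sin t := Real.sin_pos_of_pos_of_lt_pi h1 (by linarith)
    have hst1 : Real.sin t < 1 := by
      have := Real.strictMonoOn_sin ⟨by linarith, by linarith⟩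
        ⟨by linarith, le_refl (π / 2)⟩ h2
      simpa using this
    constructor
    · have : Real.arccos (Real.cos α) < Real.arccos (Real.cos α * Real.sin t) := by
        apply Real.strictAntiOn_arccos ⟨by nlinarith, by nlinarith⟩ ⟨by nlinarith, by nlinarith⟩
        nlinarith
      rwa [Real.arccos_cos hα0.le (by linarith)] at this
    · have : Real.arccos (Real.cos α * Real.sin t) < Real.arccos 0 := by
        apply Real.strictAntiOn_arccos (by norm_num) ⟨by nlinarith, by nlinarith⟩
        positivity
      rwa [Real.arccos_zero] at this
  · have h := intermediate_value_Ioo' (f := fun t => Real.arccos (Real.cos α * Real.sin t))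
      (a := (0:ℝ)) (b := π / 2) (by linarith) hcont.continuousOn
    simpa [Real.arccos_cos hα0.le (by linarith), Real.arccos_zero] using h

private lemma s15_integrableOn_of_bound {a b : ℝ} {f g : ℝ → ℝ}
    (hg : IntegrableOn g (Ioo a b))
    (hf : AEStronglyMeasurable f (volume.restrict (Ioo a b)))
    (h : ∀ φ ∈ Ioo a b, |f φ| ≤ g φ) : IntegrableOn f (Ioo a b) :=
  hg.mono' hf (by
    filter_upwards [ae_restrict_mem measurableSet_Ioo] with φ hφ
    simpa [Real.norm_eq_abs] using h φ hφ)

private lemma s15_integrableOn_inv_sqrt_left (a b : ℝ) (c : ℝ) :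
    IntegrableOn (fun φ => (Real.sqrt c)⁻¹ * (φ - a) ^ (-(1/2) : ℝ)) (Ioo a b) := by
  have h1 : IntervalIntegrable (fun x : ℝ => x ^ (-(1/2) : ℝ)) volume 0 (b - a) :=
    intervalIntegral.intervalIntegrable_rpow' (by norm_num)
  have h2 := (h1.comp_sub_right a).const_mul (Real.sqrt c)⁻¹
  rw [show (0:ℝ) + a = a by ring, show b - a + a = b by ring] at h2
  exact h2.1.mono_set Ioo_subset_Ioc_self

private lemma s15_integrableOn_inv_sqrt_right (a b : ℝ) (c : ℝ) :
    IntegrableOn (fun φ => (Real.sqrt c)⁻¹ * (b - φ) ^ (-(1/2) : ℝ)) (Ioo a b) := by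
  have h1 : IntervalIntegrable (fun x : ℝ => x ^ (-(1/2) : ℝ)) volume 0 (b - a) :=
    intervalIntegral.intervalIntegrable_rpow' (by norm_num)
  have h2 := (h1.comp_sub_left b).const_mul (Real.sqrt c)⁻¹
  rw [show b - (b - a) = a by ring, show b - 0 = b by ring] at h2
  exact h2.2.mono_set Ioo_subset_Ioc_self

private lemma s15_div_sqrt_le {s u c : ℝ} (hc : 0 < c) (hu : 0 < u)
    (hs : Real.sqrt (c * u) ≤ s) {bb : ℝ} (hbb : |bb| ≤ 1) :
    |bb / s| ≤ (Real.sqrt c)⁻¹ * u ^ (-(1/2) : ℝ) := by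
  have hcu : 0 < Real.sqrt (c * u) := Real.sqrt_pos.mpr (by positivity)
  have hs0 : 0 < s := lt_of_lt_of_le hcu hs
  have h1 : |bb / s| = |bb| / s := by rw [abs_div, abs_of_pos hs0]
  have h2 : |bb| / s ≤ 1 / Real.sqrt (c * u) := div_le_div₀ zero_le_one hbb hcu hs
  have h3 : 1 / Real.sqrt (c * u) = (Real.sqrt c)⁻¹ * u ^ (-(1/2) : ℝ) := by
    rw [Real.sqrt_mul hc.le, Real.rpow_neg hu.le, ← Real.sqrt_eq_rpow]
    rw [one_div, mul_inv]
  rw [h1, ← h3]; exact h2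

private lemma s15_m_pos {α : ℝ} (hα0 : 0 < α) (hα1 : α < π / 2) :
    0 < min (Real.sin (2 * α)) (Real.cos α) := by
  have hπ := Real.pi_pos
  exact lt_min (Real.sin_pos_of_pos_of_lt_pi (by linarith) (by linarith))
    (Real.cos_pos_of_mem_Ioo ⟨by linarith, hα1⟩)

private lemma s15_sbound_left {α : ℝ} (hα0 : 0 < α) (hα1 : α < π / 2) {φ : ℝ}
    (hφ : φ ∈ Ioo α (π / 2)) :
    Real.sqrt ((2 / π * min (Real.sin (2 * α)) (Real.cos α)) * (φ - α))
      ≤ Real.sqrt (Real.sin φ ^ 2 - Real.sin α ^ 2) := by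
  have hπ := Real.pi_pos
  obtain ⟨h1, h2⟩ := hφ
  apply Real.sqrt_le_sqrt
  rw [s15_sin_sq_sub]
  have ha : 2 / π * (φ - α) ≤ Real.sin (φ - α) :=
    Real.mul_le_sin (by linarith) (by linarith)
  have ha0 : (0:ℝ) ≤ 2 / π * (φ - α) := by
    have : (0:ℝ) ≤ 2 / π := by positivity
    nlinarith
  have hb : min (Real.sin (2 * α)) (Real.cos α) ≤ Real.sin (φ + α) := by
    rcases le_or_gt (φ + α) (π / 2) with h | h
    · refine (min_le_left _ _).trans ?_
      exact (Real.strictMonoOn_sin ⟨by linarith, by linarith⟩ ⟨by linarith, h⟩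
        (by linarith)).le
    · refine (min_le_right _ _).trans ?_
      rw [← Real.sin_pi_sub (φ + α), ← Real.sin_pi_div_two_sub α]
      exact (Real.strictMonoOn_sin ⟨by linarith, by linarith⟩ ⟨by linarith, by linarith⟩
        (by linarith)).le
  have hm := s15_m_pos hα0 hα1
  calc 2 / π * min (Real.sin (2 * α)) (Real.cos α) * (φ - α)
      = (2 / π * (φ - α)) * min (Real.sin (2 * α)) (Real.cos α) := by ring
    _ ≤ Real.sin (φ - α) * Real.sin (φ + α) :=
        mul_le_mul ha hb hm.le (by linarith)

private lemma s15_sbound_right {α : ℝ} (hα0 : 0 < α) (hα1 : α < π / 2) {φ : ℝ}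
    (hφ : φ ∈ Ioo (π / 2) (π - α)) :
    Real.sqrt ((2 / π * min (Real.sin (2 * α)) (Real.cos α)) * (π - α - φ))
      ≤ Real.sqrt (Real.sin φ ^ 2 - Real.sin α ^ 2) := by
  have hπ := Real.pi_pos
  obtain ⟨h1, h2⟩ := hφ
  apply Real.sqrt_le_sqrt
  rw [s15_sin_sq_sub]
  have ha : 2 / π * (π - α - φ) ≤ Real.sin (φ + α) := by
    rw [← Real.sin_pi_sub (φ + α)]
    have := Real.mul_le_sin (x := π - (φ + α)) (by linarith) (by linarith)
    calc 2 / π * (π - α - φ) = 2 / π * (π - (φ + α)) := by ring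
      _ ≤ _ := this
  have ha0 : (0:ℝ) ≤ 2 / π * (π - α - φ) := by
    have : (0:ℝ) ≤ 2 / π := by positivity
    nlinarith
  have hb : min (Real.sin (2 * α)) (Real.cos α) ≤ Real.sin (φ - α) := by
    rcases le_or_gt (φ - α) (π / 2) with h | h
    · refine (min_le_right _ _).trans ?_
      rw [← Real.sin_pi_div_two_sub α]
      exact (Real.strictMonoOn_sin ⟨by linarith, by linarith⟩ ⟨by linarith, h⟩
        (by linarith)).le
    · refine (min_le_left _ _).trans ?_
      rw [← Real.sin_pi_sub (φ - α)]
      exact (Real.strictMonoOn_sin ⟨by linarith, by linarith⟩ ⟨by linarith, by linarith⟩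
        (by linarith)).le
  have hm := s15_m_pos hα0 hα1
  calc 2 / π * min (Real.sin (2 * α)) (Real.cos α) * (π - α - φ)
      = (2 / π * (π - α - φ)) * min (Real.sin (2 * α)) (Real.cos α) := by ring
    _ ≤ Real.sin (φ + α) * min (Real.sin (2 * α)) (Real.cos α) :=
        mul_le_mul_of_nonneg_right ha hm.le
    _ ≤ Real.sin (φ - α) * Real.sin (φ + α) := by
        have hs0 : 0 ≤ Real.sin (φ + α) := le_trans ha0 ha
        nlinarith [mul_le_mul_of_nonneg_right hb hs0]

private lemma s15_meas {α : ℝ} (b : ℝ → ℝ) (hm : Measurable b) :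
    Measurable fun φ => b φ / Real.sqrt (Real.sin φ ^ 2 - Real.sin α ^ 2) :=
  hm.div ((Real.continuous_sqrt.comp
    ((Real.continuous_sin.pow 2).sub continuous_const)).measurable)

private lemma s15_intLeft {α : ℝ} (hα0 : 0 < α) (hα1 : α < π / 2) (b : ℝ → ℝ)
    (hm : Measurable b) (hb : ∀ φ, |b φ| ≤ 1) :
    IntegrableOn (fun φ => b φ / Real.sqrt (Real.sin φ ^ 2 - Real.sin α ^ 2))
      (Ioo α (π / 2)) := by
  have hc : 0 < 2 / π * min (Real.sin (2 * α)) (Real.cos α) := by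
    have := s15_m_pos hα0 hα1
    have hπ := Real.pi_pos
    positivity
  apply s15_integrableOn_of_bound
    (s15_integrableOn_inv_sqrt_left α (π / 2) (2 / π * min (Real.sin (2 * α)) (Real.cos α)))
    ((s15_meas b hm).aestronglyMeasurable)
  intro φ hφ
  exact s15_div_sqrt_le hc (by linarith [hφ.1]) (s15_sbound_left hα0 hα1 hφ) (hb φ)

private lemma s15_intRight {α : ℝ} (hα0 : 0 < α) (hα1 : α < π / 2) (b : ℝ → ℝ)
    (hm : Measurable b) (hb : ∀ φ, |b φ| ≤ 1) :
    IntegrableOn (fun φ => b φ / Real.sqrt (Real.sin φ ^ 2 - Real.sin α ^ 2))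
      (Ioo (π / 2) (π - α)) := by
  have hc : 0 < 2 / π * min (Real.sin (2 * α)) (Real.cos α) := by
    have := s15_m_pos hα0 hα1
    have hπ := Real.pi_pos
    positivity
  apply s15_integrableOn_of_bound
    (s15_integrableOn_inv_sqrt_right (π / 2) (π - α)
      (2 / π * min (Real.sin (2 * α)) (Real.cos α)))
    ((s15_meas b hm).aestronglyMeasurable)
  intro φ hφ
  exact s15_div_sqrt_le hc (by linarith [hφ.2]) (s15_sbound_right hα0 hα1 hφ) (hb φ)

end Stmt15Aux

/-- For `0 < α < π/2`,
`∫_{cos(2(π−α)/3)}^{cos(2α/3)} dx / √(8(x+1)(cos 2α + 3x − 4x³))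
  = (1/(3√2)) · ∫₀^{π/2} cos((1/3)·arcsin(cos α · sin t)) / √(1 − cos²α sin²t) dt`. -/
theorem stmt_15 (α : ℝ) (hα0 : 0 < α) (hα1 : α < Real.pi / 2) :
    (∫ x in (Real.cos (2 * (Real.pi - α) / 3))..(Real.cos (2 * α / 3)),
        1 / Real.sqrt (8 * (x + 1) * (Real.cos (2 * α) + 3 * x - 4 * x ^ 3))) =
      (1 / (3 * Real.sqrt 2)) * ∫ t in (0:ℝ)..(Real.pi / 2),
        Real.cos ((1/3) * Real.arcsin (Real.cos α * Real.sin t)) /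
          Real.sqrt (1 - Real.cos α ^ 2 * Real.sin t ^ 2) := by
  open MeasureTheory Set in
  have hπ := Real.pi_pos
  -- ### Left-hand side: substitution x = cos (2φ/3) on Ioo α (π−α)
  have hc12 : Real.cos (2 * (π - α) / 3) < Real.cos (2 * α / 3) :=
    Real.strictAntiOn_cos ⟨by linarith, by linarith⟩ ⟨by linarith, by linarith⟩ (by linarith)
  rw [intervalIntegral.integral_of_le hc12.le, MeasureTheory.integral_Ioc_eq_integral_Ioo,
    ← s15_lhs_image hα0 hα1]
  have hderiv : ∀ φ ∈ Ioo α (π - α),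
      HasDerivWithinAt (fun φ => Real.cos (2 * φ / 3))
        ((-Real.sin (2 * φ / 3)) * (2 / 3)) (Ioo α (π - α)) φ := by
    intro φ _
    have h1 : HasDerivAt (fun x : ℝ => 2 * x / 3) (2 / 3) φ := by
      simpa using ((hasDerivAt_id φ).const_mul (2:ℝ)).div_const 3
    exact ((Real.hasDerivAt_cos (2 * φ / 3)).comp φ h1).hasDerivWithinAt
  have hinj : InjOn (fun φ => Real.cos (2 * φ / 3)) (Ioo α (π - α)) := by
    intro x hx y hy h
    have := Real.injOn_cos
      (show 2 * x / 3 ∈ Icc 0 π from ⟨by linarith [hx.1, hx.2], by linarith [hx.1, hx.2]⟩)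
      (show 2 * y / 3 ∈ Icc 0 π from ⟨by linarith [hy.1, hy.2], by linarith [hy.1, hy.2]⟩) h
    linarith
  rw [MeasureTheory.integral_image_eq_integral_abs_deriv_smul measurableSet_Ioo hderiv hinj]
  rw [MeasureTheory.setIntegral_congr_fun measurableSet_Ioo
    (g := fun φ => 1 / (3 * Real.sqrt 2) *
      (Real.sin (φ / 3) / Real.sqrt (Real.sin φ ^ 2 - Real.sin α ^ 2)))
    (fun φ hφ => by
      have := s15_lhs_pointwise hα0 hα1 (s15_sq_pos hα0 hφ)
        (by linarith [hφ.1]) (by linarith [hφ.2])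
      simpa [smul_eq_mul] using this)]
  rw [MeasureTheory.integral_const_mul]
  -- ### Right-hand side: substitution φ = arccos (cos α · sin t)
  rw [intervalIntegral.integral_of_le (by linarith : (0:ℝ) ≤ π / 2),
    MeasureTheory.integral_Ioc_eq_integral_Ioo]
  congr 1
  have hca : 0 < Real.cos α := Real.cos_pos_of_mem_Ioo ⟨by linarith, hα1⟩
  have hca1 : Real.cos α < 1 := by
    have := Real.strictAntiOn_cos ⟨le_refl 0, hπ.le⟩ ⟨hα0.le, by linarith⟩ hα0
    simpa using this
  have hJ : (∫ φ in Ioo α (π / 2),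
        Real.cos (π / 6 - φ / 3) / Real.sqrt (Real.sin φ ^ 2 - Real.sin α ^ 2))
      = ∫ t in Ioo (0:ℝ) (π / 2),
        Real.cos ((1/3) * Real.arcsin (Real.cos α * Real.sin t)) /
          Real.sqrt (1 - Real.cos α ^ 2 * Real.sin t ^ 2) := by
    rw [← s15_rhs_image hα0 hα1]
    have hd2 : ∀ t ∈ Ioo (0:ℝ) (π / 2),
        HasDerivWithinAt (fun t => Real.arccos (Real.cos α * Real.sin t))
          ((-(1 / Real.sqrt (1 - (Real.cos α * Real.sin t) ^ 2))) *
            (Real.cos α * Real.cos t)) (Ioo (0:ℝ) (π / 2)) t := by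
      intro t ht
      have hst : 0 < Real.sin t := Real.sin_pos_of_pos_of_lt_pi ht.1 (by linarith [ht.2])
      have hst1 : Real.sin t ≤ 1 := Real.sin_le_one t
      have hy1 : Real.cos α * Real.sin t < 1 := by nlinarith
      have hy0 : 0 < Real.cos α * Real.sin t := by positivity
      have h1 : HasDerivAt (fun t : ℝ => Real.cos α * Real.sin t)
          (Real.cos α * Real.cos t) t := (Real.hasDerivAt_sin t).const_mul (Real.cos α)
      exact ((Real.hasDerivAt_arccos (by linarith) (by linarith)).comp t h1).hasDerivWithinAt
    have hinj2 : InjOn (fun t => Real.arccos (Real.cos α * Real.sin t)) (Ioo (0:ℝ) (π / 2)) := by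
      intro x hx y hy h
      have hsx : 0 < Real.sin x := Real.sin_pos_of_pos_of_lt_pi hx.1 (by linarith [hx.2])
      have hsy : 0 < Real.sin y := Real.sin_pos_of_pos_of_lt_pi hy.1 (by linarith [hy.2])
      have h2 := Real.arccos_injOn
        ⟨by nlinarith [Real.sin_le_one x], by nlinarith [Real.sin_le_one x]⟩
        ⟨by nlinarith [Real.sin_le_one y], by nlinarith [Real.sin_le_one y]⟩ h
      have h3 : Real.sin x = Real.sin y := by
        exact mul_left_cancel₀ hca.ne' h2
      exact Real.injOn_sin ⟨by linarith [hx.1], by linarith [hx.2]⟩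
        ⟨by linarith [hy.1], by linarith [hy.2]⟩ h3
    rw [MeasureTheory.integral_image_eq_integral_abs_deriv_smul measurableSet_Ioo hd2 hinj2]
    exact MeasureTheory.setIntegral_congr_fun measurableSet_Ioo
      (fun t ht => by simpa [smul_eq_mul] using s15_rhs_pointwise hα0 hα1 ht)
  rw [← hJ]
  -- ### reflection φ ↦ π − φ
  have hreflect : (∫ φ in Ioo (π / 2) (π - α),
        Real.sin (φ / 3) / Real.sqrt (Real.sin φ ^ 2 - Real.sin α ^ 2))
      = ∫ φ in Ioo α (π / 2),
        Real.sin (π / 3 - φ / 3) / Real.sqrt (Real.sin φ ^ 2 - Real.sin α ^ 2) := by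
    have him : (fun x : ℝ => π - x) '' Ioo α (π / 2) = Ioo (π / 2) (π - α) := by
      rw [Set.image_const_sub_Ioo, sub_half]
    rw [← him]
    have hd3 : ∀ φ ∈ Ioo α (π / 2),
        HasDerivWithinAt (fun x : ℝ => π - x) (-1 : ℝ) (Ioo α (π / 2)) φ :=
      fun φ _ => ((hasDerivAt_id φ).const_sub π).hasDerivWithinAt
    have hinj3 : InjOn (fun x : ℝ => π - x) (Ioo α (π / 2)) := by
      intro x _ y _ h
      simp only at h
      linarith
    rw [MeasureTheory.integral_image_eq_integral_abs_deriv_smul measurableSet_Ioo hd3 hinj3]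
    refine MeasureTheory.setIntegral_congr_fun measurableSet_Ioo (fun φ _ => ?_)
    simp only [smul_eq_mul, abs_neg, abs_one, one_mul, Real.sin_pi_sub]
    rw [show (π - φ) / 3 = π / 3 - φ / 3 by ring]
  -- ### split the interval and recombine
  have hsplit : (∫ φ in Ioo α (π - α),
        Real.sin (φ / 3) / Real.sqrt (Real.sin φ ^ 2 - Real.sin α ^ 2))
      = (∫ φ in Ioo α (π / 2),
          Real.sin (φ / 3) / Real.sqrt (Real.sin φ ^ 2 - Real.sin α ^ 2))
        + ∫ φ in Ioo (π / 2) (π - α),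
            Real.sin (φ / 3) / Real.sqrt (Real.sin φ ^ 2 - Real.sin α ^ 2) := by
    have hms : Measurable fun φ : ℝ => Real.sin (φ / 3) :=
      (Real.continuous_sin.comp (continuous_id.div_const 3)).measurable
    have hbs : ∀ φ : ℝ, |Real.sin (φ / 3)| ≤ 1 :=
      fun φ => abs_le.mpr ⟨Real.neg_one_le_sin _, Real.sin_le_one _⟩
    have hIL := s15_intLeft hα0 hα1 _ hms hbs
    have hIR := s15_intRight hα0 hα1 _ hms hbs
    have hIR' : IntegrableOn
        (fun φ => Real.sin (φ / 3) / Real.sqrt (Real.sin φ ^ 2 - Real.sin α ^ 2))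
        (Ico (π / 2) (π - α)) :=
      (integrableOn_Ico_iff_integrableOn_Ioo).mpr hIR
    have hdisj : Disjoint (Ioo α (π / 2)) (Ico (π / 2) (π - α)) := by
      apply Set.disjoint_left.mpr
      rintro x ⟨_, h2⟩ ⟨h3, _⟩
      linarith
    rw [← Set.Ioo_union_Ico_eq_Ioo hα1 (by linarith : π / 2 ≤ π - α),
      MeasureTheory.setIntegral_union hdisj measurableSet_Ico hIL hIR',
      MeasureTheory.integral_Ico_eq_integral_Ioo]
  rw [hsplit, hreflect]
  -- combine the two integrals over Ioo α (π/2)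
  have hms1 : Measurable fun φ : ℝ => Real.sin (φ / 3) :=
    (Real.continuous_sin.comp (continuous_id.div_const 3)).measurable
  have hms2 : Measurable fun φ : ℝ => Real.sin (π / 3 - φ / 3) :=
    (Real.continuous_sin.comp (continuous_const.sub (continuous_id.div_const 3))).measurable
  have hbs1 : ∀ φ : ℝ, |Real.sin (φ / 3)| ≤ 1 :=
    fun φ => abs_le.mpr ⟨Real.neg_one_le_sin _, Real.sin_le_one _⟩
  have hbs2 : ∀ φ : ℝ, |Real.sin (π / 3 - φ / 3)| ≤ 1 :=
    fun φ => abs_le.mpr ⟨Real.neg_one_le_sin _, Real.sin_le_one _⟩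
  rw [← MeasureTheory.integral_add (s15_intLeft hα0 hα1 _ hms1 hbs1)
    (s15_intLeft hα0 hα1 _ hms2 hbs2)]
  refine MeasureTheory.setIntegral_congr_fun measurableSet_Ioo (fun φ _ => ?_)
  rw [← add_div, s15_sin_add_sin (φ / 3)]
end

section
/- For 0 < α < π/2, ∫_{α}^{π−α} sin(θ/3) / √(cos 2α − cos 2θ) dθ = ∫₀^{π/2 − α} cos(ψ/3) / √(cos 2ψ − cos(2(π/2 − α))) dψ; that is, with β = π/2 − α, the left-hand side equals ∫₀^{β} cos(ψ/3) / √(cos 2ψ − cos 2β) dψ. -/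
open Real intervalIntegral

/-- Concavity-type lower bound for sine on `[0, π]`. -/
lemma sin_ge_aux {x : ℝ} (h0 : 0 ≤ x) (h1 : x ≤ Real.pi) :
    2 / Real.pi * min x (Real.pi - x) ≤ Real.sin x := by
  have hπ := Real.pi_pos
  rcases le_or_gt x (Real.pi / 2) with h | h
  · have hs := Real.mul_le_sin h0 h
    have hmin : min x (Real.pi - x) ≤ x := min_le_left _ _
    have h2 : (0:ℝ) ≤ 2 / Real.pi := by positivity
    nlinarith
  · rw [← Real.sin_pi_sub]
    have hs := Real.mul_le_sin (x := Real.pi - x) (by linarith) (by linarith)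
    have hmin : min x (Real.pi - x) ≤ Real.pi - x := min_le_right _ _
    have h2 : (0:ℝ) ≤ 2 / Real.pi := by positivity
    nlinarith

/-- Lower bound for the denominator. -/
lemma denom_ge_aux {β ψ : ℝ} (hβ0 : 0 < β) (hβ1 : β < Real.pi / 2)
    (h0 : 0 ≤ ψ) (h1 : ψ ≤ β) :
    8 * min β (Real.pi - 2 * β) / Real.pi ^ 2 * (β - ψ) ≤
      Real.cos (2 * ψ) - Real.cos (2 * β) := by
  have hπ := Real.pi_pos
  set m := min β (Real.pi - 2 * β) with hm
  have hm0 : 0 < m := lt_min hβ0 (by linarith)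
  have e : Real.cos (2 * ψ) - Real.cos (2 * β)
      = 2 * Real.sin (ψ + β) * Real.sin (β - ψ) := by
    rw [Real.cos_sub_cos, show (2 * ψ + 2 * β) / 2 = ψ + β by ring,
      show (2 * ψ - 2 * β) / 2 = -(β - ψ) by ring, Real.sin_neg]
    ring
  have h2 : 2 / Real.pi * (β - ψ) ≤ Real.sin (β - ψ) :=
    Real.mul_le_sin (by linarith) (by linarith)
  have h3 : 2 / Real.pi * m ≤ Real.sin (ψ + β) := by
    refine le_trans ?_ (sin_ge_aux (by linarith) (by linarith))
    have hmin : m ≤ min (ψ + β) (Real.pi - (ψ + β)) :=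
      le_min (le_trans (min_le_left _ _) (by linarith))
        (le_trans (min_le_right _ _) (by linarith))
    have h2 : (0:ℝ) ≤ 2 / Real.pi := by positivity
    nlinarith
  have s1 : 0 ≤ 2 / Real.pi * (β - ψ) := mul_nonneg (by positivity) (by linarith)
  have s2 : 0 ≤ Real.sin (ψ + β) := le_trans (by positivity) h3
  have hmul : (2 / Real.pi * m) * (2 / Real.pi * (β - ψ))
      ≤ Real.sin (ψ + β) * Real.sin (β - ψ) := mul_le_mul h3 h2 s1 s2
  have key : 8 * m / Real.pi ^ 2 * (β - ψ)
      = 2 * ((2 / Real.pi * m) * (2 / Real.pi * (β - ψ))) := by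
    field_simp
    ring
  rw [e, key]
  nlinarith

/-- Integrability of `f ψ / √(cos 2ψ - cos 2β)` on `[0, β]` for bounded measurable `f`. -/
lemma integrable_aux {β : ℝ} (hβ0 : 0 < β) (hβ1 : β < Real.pi / 2)
    (f : ℝ → ℝ) (hfc : Continuous f) (hf1 : ∀ ψ, |f ψ| ≤ 1) :
    IntervalIntegrable
      (fun ψ => f ψ / Real.sqrt (Real.cos (2 * ψ) - Real.cos (2 * β)))
      MeasureTheory.volume 0 β := by
  have hπ := Real.pi_pos
  set m := min β (Real.pi - 2 * β) with hm
  have hm0 : 0 < m := lt_min hβ0 (by linarith)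
  set K : ℝ := 8 * m / Real.pi ^ 2 with hK
  have hK0 : 0 < K := by positivity
  -- integrable bound
  have hbd : IntervalIntegrable
      (fun ψ => K ^ (-(1/2) : ℝ) * (β - ψ) ^ (-(1/2) : ℝ))
      MeasureTheory.volume 0 β := by
    have h1 : IntervalIntegrable (fun x : ℝ => x ^ (-(1/2) : ℝ))
        MeasureTheory.volume β 0 := intervalIntegral.intervalIntegrable_rpow' (by norm_num)
    have h2 := (h1.comp_sub_left β).const_mul (K ^ (-(1/2) : ℝ))
    simpa using h2
  refine hbd.mono_fun ?_ ?_
  · exact ((hfc.measurable.div ((Real.continuous_sqrt.comp (by continuity)).measurable))).aestronglyMeasurable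
  · apply (MeasureTheory.ae_restrict_iff' measurableSet_uIoc).mpr
    refine Filter.Eventually.of_forall fun ψ hψ => ?_
    rw [Set.uIoc_of_le hβ0.le] at hψ
    obtain ⟨hψ0, hψ1⟩ := hψ
    have hDK : K * (β - ψ) ≤ Real.cos (2 * ψ) - Real.cos (2 * β) :=
      denom_ge_aux hβ0 hβ1 hψ0.le hψ1
    have hbnd_nonneg : 0 ≤ K ^ (-(1/2) : ℝ) * (β - ψ) ^ (-(1/2) : ℝ) :=
      mul_nonneg (Real.rpow_nonneg hK0.le _) (Real.rpow_nonneg (by linarith) _)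
    simp only [Real.norm_eq_abs, abs_div, abs_of_nonneg (Real.sqrt_nonneg _),
      abs_of_nonneg hbnd_nonneg]
    rcases eq_or_lt_of_le hψ1 with heq | hlt
    · subst heq
      simp [div_nonneg, Real.sqrt_nonneg, hbnd_nonneg]
    · have hD0 : 0 < Real.cos (2 * ψ) - Real.cos (2 * β) := by
        have : 0 < K * (β - ψ) := mul_pos hK0 (by linarith)
        linarith
      have hs0 : 0 < Real.sqrt (K * (β - ψ)) :=
        Real.sqrt_pos.mpr (mul_pos hK0 (by linarith))
      calc |f ψ| / Real.sqrt (Real.cos (2 * ψ) - Real.cos (2 * β))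
          ≤ 1 / Real.sqrt (K * (β - ψ)) := by
            apply div_le_div₀ (by norm_num) (hf1 ψ) hs0
            exact Real.sqrt_le_sqrt hDK
        _ = K ^ (-(1/2) : ℝ) * (β - ψ) ^ (-(1/2) : ℝ) := by
            rw [Real.sqrt_eq_rpow, one_div, ← Real.rpow_neg
              (mul_nonneg hK0.le (by linarith)),
              Real.mul_rpow hK0.le (by linarith)]

/-- For `0 < α < π/2`, with `β = π/2 − α`,
`∫_α^{π−α} sin(θ/3)/√(cos 2α − cos 2θ) dθ = ∫₀^β cos(ψ/3)/√(cos 2ψ − cos 2β) dψ`. -/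
theorem stmt_16 (α : ℝ) (hα0 : 0 < α) (hα1 : α < Real.pi / 2) :
    (∫ θ in α..(Real.pi - α),
        Real.sin (θ / 3) / Real.sqrt (Real.cos (2 * α) - Real.cos (2 * θ))) =
      ∫ ψ in (0:ℝ)..(Real.pi / 2 - α),
        Real.cos (ψ / 3) /
          Real.sqrt (Real.cos (2 * ψ) - Real.cos (2 * (Real.pi / 2 - α))) := by
  have hπ := Real.pi_pos
  set β : ℝ := Real.pi / 2 - α with hβ
  have hβ0 : 0 < β := by simp [hβ]; linarith
  have hβ1 : β < Real.pi / 2 := by rw [hβ]; linarith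
  set g : ℝ → ℝ := fun ψ =>
    Real.sin (Real.pi / 6 - ψ / 3) / Real.sqrt (Real.cos (2 * ψ) - Real.cos (2 * β))
    with hg
  -- Step 1: substitution θ = π/2 - ψ
  have step1 : (∫ θ in α..(Real.pi - α),
      Real.sin (θ / 3) / Real.sqrt (Real.cos (2 * α) - Real.cos (2 * θ)))
      = ∫ ψ in (-β)..β, g ψ := by
    have h := intervalIntegral.integral_comp_sub_left
      (a := -β) (b := β)
      (fun θ => Real.sin (θ / 3) / Real.sqrt (Real.cos (2 * α) - Real.cos (2 * θ)))
      (Real.pi / 2)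
    have ha : Real.pi / 2 - β = α := by rw [hβ]; ring
    have hb : Real.pi / 2 - (-β) = Real.pi - α := by rw [hβ]; ring
    rw [ha, hb] at h
    rw [← h]
    apply intervalIntegral.integral_congr
    intro ψ _
    show Real.sin ((Real.pi / 2 - ψ) / 3) /
        Real.sqrt (Real.cos (2 * α) - Real.cos (2 * (Real.pi / 2 - ψ))) = g ψ
    rw [hg]
    congr 1
    · congr 1; ring
    · congr 1
      have h1 : 2 * α = Real.pi - 2 * β := by rw [hβ]; ring
      have h2 : 2 * (Real.pi / 2 - ψ) = Real.pi - 2 * ψ := by ring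
      rw [h1, h2, Real.cos_pi_sub, Real.cos_pi_sub]
      ring
  -- integrability
  have hint_right : IntervalIntegrable g MeasureTheory.volume 0 β := by
    apply integrable_aux hβ0 hβ1
    · continuity
    · intro ψ; exact Real.abs_sin_le_one _
  have hint_negcomp : IntervalIntegrable (fun ψ =>
      Real.sin (Real.pi / 6 + ψ / 3) / Real.sqrt (Real.cos (2 * ψ) - Real.cos (2 * β)))
      MeasureTheory.volume 0 β := by
    apply integrable_aux hβ0 hβ1
    · continuity
    · intro ψ; exact Real.abs_sin_le_one _
  have hgneg : (fun ψ => g (-ψ)) = fun ψ =>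
      Real.sin (Real.pi / 6 + ψ / 3) / Real.sqrt (Real.cos (2 * ψ) - Real.cos (2 * β)) := by
    funext ψ
    rw [hg]
    show Real.sin (Real.pi / 6 - -ψ / 3) / Real.sqrt (Real.cos (2 * -ψ) - Real.cos (2 * β)) = _
    rw [show (2 : ℝ) * -ψ = -(2 * ψ) by ring, Real.cos_neg,
      show Real.pi / 6 - -ψ / 3 = Real.pi / 6 + ψ / 3 by ring]
  have hint_left : IntervalIntegrable g MeasureTheory.volume (-β) 0 := by
    rw [IntervalIntegrable.iff_comp_neg, hgneg]
    simpa using hint_negcomp.symm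
  -- Step 2: split and fold
  have step2 : (∫ ψ in (-β)..β, g ψ)
      = (∫ ψ in (0:ℝ)..β, g (-ψ)) + ∫ ψ in (0:ℝ)..β, g ψ := by
    rw [← intervalIntegral.integral_add_adjacent_intervals hint_left hint_right]
    congr 1
    rw [intervalIntegral.integral_comp_neg g (a := 0) (b := β), neg_zero]
  have step3 : (∫ ψ in (0:ℝ)..β, g (-ψ)) + (∫ ψ in (0:ℝ)..β, g ψ)
      = ∫ ψ in (0:ℝ)..β,
          Real.cos (ψ / 3) / Real.sqrt (Real.cos (2 * ψ) - Real.cos (2 * β)) := by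
    have hi1 : IntervalIntegrable (fun ψ => g (-ψ)) MeasureTheory.volume 0 β := by
      rw [hgneg]; exact hint_negcomp
    rw [← intervalIntegral.integral_add hi1 hint_right]
    apply intervalIntegral.integral_congr
    intro ψ _
    show g (-ψ) + g ψ = _
    have := congrFun hgneg ψ
    rw [this, hg]
    show Real.sin (Real.pi / 6 + ψ / 3) / _ + Real.sin (Real.pi / 6 - ψ / 3) / _ = _
    rw [← add_div]
    congr 1
    rw [Real.sin_add, Real.sin_sub, Real.sin_pi_div_six]
    ring
  rw [step1, step2, step3]
end

section
/- For 0 < α < π/2 and λ = cos α, (3/2) · ∫_{2cos(2α/3) − 1}^{1} 1 / √((1 − δ)(δ³ + 3δ² − 4λ²)) dδ = √2 · ∫₀^{α} cos(t/3) / √(cos 2t − cos 2α) dt. -/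
open Real intervalIntegral

/-- For `0 < α < π/2` and `λ = cos α`,
`(3/2)·∫_{2cos(2α/3)−1}^{1} dδ / √((1 − δ)(δ³ + 3δ² − 4λ²))
  = √2 · ∫₀^α cos(t/3)/√(cos 2t − cos 2α) dt`. -/
theorem stmt_17 (α : ℝ) (hα0 : 0 < α) (hα1 : α < Real.pi / 2)
    (l : ℝ) (hl : l = Real.cos α) :
    (3/2) * (∫ δ in (2 * Real.cos (2 * α / 3) - 1)..(1:ℝ),
        1 / Real.sqrt ((1 - δ) * (δ ^ 3 + 3 * δ ^ 2 - 4 * l ^ 2))) =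
      Real.sqrt 2 * ∫ t in (0:ℝ)..α,
        Real.cos (t / 3) / Real.sqrt (Real.cos (2 * t) - Real.cos (2 * α)) := by
  have hπ := Real.pi_pos
  set c : ℝ := 2 * Real.cos (2 * α / 3) - 1 with hc
  set f : ℝ → ℝ := fun t => 2 * Real.cos (2 * t / 3) - 1 with hfdef
  set F : ℝ → ℝ := fun t => -(4/3) * Real.sin (2 * t / 3) with hFdef
  set g : ℝ → ℝ := fun δ =>
      1 / Real.sqrt ((1 - δ) * (δ ^ 3 + 3 * δ ^ 2 - 4 * l ^ 2)) with hgdef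
  have hαπ : α < Real.pi := by linarith
  have hc1 : c < 1 := by
    have : Real.cos (2 * α / 3) < Real.cos 0 :=
      Real.cos_lt_cos_of_nonneg_of_le_pi le_rfl (by linarith) (by linarith)
    simp only [Real.cos_zero] at this
    simp only [hc]; linarith
  -- derivative of f
  have hderiv : ∀ t : ℝ, HasDerivAt f (F t) t := by
    intro t
    have h1 : HasDerivAt (fun t : ℝ => 2 * t / 3) (2/3) t := by
      simpa using ((hasDerivAt_id t).const_mul (2:ℝ)).div_const 3
    have h2 := (Real.hasDerivAt_cos (2 * t / 3)).comp t h1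
    have h3 := (h2.const_mul (2:ℝ)).sub_const 1
    refine h3.congr_deriv ?_
    simp [hFdef]; ring
  -- strict antitonicity on Icc 0 α
  have hanti : StrictAntiOn f (Set.Icc 0 α) := by
    intro x hx y hy hxy
    have : Real.cos (2 * y / 3) < Real.cos (2 * x / 3) :=
      Real.cos_lt_cos_of_nonneg_of_le_pi (by linarith [hx.1])
        (by nlinarith [hy.2]) (by linarith)
    simp only [hfdef]; linarith
  have hcont : ContinuousOn f (Set.Icc 0 α) := by
    apply Continuous.continuousOn; fun_prop
  -- image of the open interval
  have himg : f '' Set.Ioo 0 α = Set.Ioo c 1 := by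
    have hf0 : f 0 = 1 := by norm_num [hfdef]
    have hfα : f α = c := rfl
    apply Set.Subset.antisymm
    · rintro _ ⟨t, ht, rfl⟩
      constructor
      · have h1 := hanti (Set.Ioo_subset_Icc_self ht) (Set.right_mem_Icc.2 hα0.le) ht.2
        rwa [hfα] at h1
      · have h2 := hanti (Set.left_mem_Icc.2 hα0.le) (Set.Ioo_subset_Icc_self ht) ht.1
        rwa [hf0] at h2
    · have h := intermediate_value_Ioo' hα0.le hcont
      rw [hf0, hfα] at h
      exact h
  -- change of variables
  have key := MeasureTheory.integral_image_eq_integral_abs_deriv_smul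
      measurableSet_Ioo
      (fun x (_ : x ∈ Set.Ioo (0:ℝ) α) => (hderiv x).hasDerivWithinAt)
      ((hanti.injOn).mono Set.Ioo_subset_Icc_self) g
  rw [himg] at key
  -- pointwise identification of the transformed integrand
  have hpt : Set.EqOn (fun t => |F t| • g (f t))
      (fun t => Real.sqrt 2 * (2/3) *
        (Real.cos (t / 3) / Real.sqrt (Real.cos (2 * t) - Real.cos (2 * α))))
      (Set.Ioo (0:ℝ) α) := by
    intro t ht
    obtain ⟨ht0, htα⟩ := ht
    have hs : 0 < Real.sin (t / 3) :=
      Real.sin_pos_of_pos_of_lt_pi (by linarith) (by nlinarith)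
    have hX : 0 < Real.cos (2 * t) - Real.cos (2 * α) := by
      have : Real.cos (2 * α) < Real.cos (2 * t) :=
        Real.cos_lt_cos_of_nonneg_of_le_pi (by linarith) (by linarith) (by linarith)
      linarith
    have e1 : Real.cos (2 * t / 3) = 1 - 2 * Real.sin (t / 3) ^ 2 := by
      have h1 : Real.cos (2 * (t / 3)) = Real.cos (t/3) ^ 2 - Real.sin (t/3) ^ 2 :=
        Real.cos_two_mul' _
      have h2 : Real.cos (t/3) ^ 2 = 1 - Real.sin (t/3) ^ 2 := Real.cos_sq' _
      rw [show 2 * t / 3 = 2 * (t / 3) by ring, h1, h2]; ring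
    have e2 : Real.cos (2 * t) = 4 * Real.cos (2 * t / 3) ^ 3 - 3 * Real.cos (2 * t / 3) := by
      have h := Real.cos_three_mul (2 * t / 3)
      rw [show 3 * (2 * t / 3) = 2 * t by ring] at h
      exact h
    have e3 : Real.cos (2 * α) = 2 * l ^ 2 - 1 := by
      rw [hl, Real.cos_two_mul]
    have hprod : (1 - f t) * (f t ^ 3 + 3 * f t ^ 2 - 4 * l ^ 2)
        = 8 * Real.sin (t / 3) ^ 2 * (Real.cos (2 * t) - Real.cos (2 * α)) := by
      simp only [hfdef]
      rw [e2, e3, e1]; ring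
    have hsqrt : Real.sqrt ((1 - f t) * (f t ^ 3 + 3 * f t ^ 2 - 4 * l ^ 2))
        = 2 * Real.sin (t / 3) * (Real.sqrt 2 * Real.sqrt (Real.cos (2 * t) - Real.cos (2 * α))) := by
      rw [hprod, show (8:ℝ) * Real.sin (t / 3) ^ 2 * (Real.cos (2 * t) - Real.cos (2 * α))
          = (2 * Real.sin (t / 3)) ^ 2 * (2 * (Real.cos (2 * t) - Real.cos (2 * α))) by ring,
        Real.sqrt_mul (sq_nonneg _), Real.sqrt_sq (by positivity),
        Real.sqrt_mul (by norm_num : (0:ℝ) ≤ 2)]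
    have habs : |F t| = (4/3) * Real.sin (2 * t / 3) := by
      have hsin23 : 0 ≤ Real.sin (2 * t / 3) :=
        (Real.sin_pos_of_pos_of_lt_pi (by linarith) (by linarith)).le
      simp only [hFdef]
      rw [abs_of_nonpos (by nlinarith)]; ring
    have hsin2 : Real.sin (2 * t / 3) = 2 * Real.sin (t / 3) * Real.cos (t / 3) := by
      rw [show 2 * t / 3 = 2 * (t / 3) by ring]
      exact Real.sin_two_mul _
    have hsX : Real.sqrt (Real.cos (2 * t) - Real.cos (2 * α)) ≠ 0 := by positivity
    have h2 : Real.sqrt 2 * Real.sqrt 2 = 2 := Real.mul_self_sqrt (by norm_num)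
    simp only [hgdef, smul_eq_mul]
    rw [hsqrt, habs, hsin2]
    field_simp
    linear_combination (-2 * Real.cos (t/3)) * h2
  -- put everything together
  have L : (∫ δ in c..(1:ℝ), g δ)
      = Real.sqrt 2 * (2/3) * ∫ t in (0:ℝ)..α,
          Real.cos (t / 3) / Real.sqrt (Real.cos (2 * t) - Real.cos (2 * α)) := by
    rw [intervalIntegral.integral_of_le hc1.le, MeasureTheory.integral_Ioc_eq_integral_Ioo, key,
      MeasureTheory.setIntegral_congr_fun measurableSet_Ioo hpt,
      MeasureTheory.integral_const_mul,
      intervalIntegral.integral_of_le hα0.le, MeasureTheory.integral_Ioc_eq_integral_Ioo]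
  rw [L]
  ring
end
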